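/- arXiv:math/0008056 — 12 statements merged into one kernel-verified Lean document; each statement's English description precedes it below -/
import Mathlib

section
/- Let I be a finite index set with a distinguished element 0, and let S be a unitary complex matrix indexed by I whose 0-column entries S_{λ,0} are real and satisfy S_{λ,0} ≥ S_{0,0} > 0 for all λ ∈ I. If Z is a matrix indexed by I with non-negative real entries such that Z_{0,0} = 1 and ZS = SZ, then the sum of all entries of Z is bounded by S_{0,0}^{-2}, i.e. Σ_{λ,μ∈I} Z_{λ,μ} ≤ 1/S_{0,0}^2. -/
/-- For a unitary matrix `S` indexed by a finite set `I` with distinguished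
element `i0`, whose `i0`-column entries are real and satisfy `S λ i0 ≥ S i0 i0 > 0`, any
coupling matrix `Z` (non-negative real entries, `Z i0 i0 = 1`, `ZS = SZ`) has total entry
sum bounded by `1 / (S i0 i0)^2`. -/
theorem coupling_matrix_entry_sum_bound
    {I : Type*} [Fintype I] [DecidableEq I] (i0 : I)
    (S : Matrix I I ℂ) (hS : S ∈ Matrix.unitaryGroup I ℂ)
    (hreal : ∀ lam : I, (S lam i0).im = 0)
    (hpos : 0 < (S i0 i0).re)
    (hge : ∀ lam : I, (S i0 i0).re ≤ (S lam i0).re)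
    (Z : Matrix I I ℝ)
    (hZnn : ∀ lam mu : I, 0 ≤ Z lam mu)
    (hZ00 : Z i0 i0 = 1)
    (hcomm : Z.map (Complex.ofReal) * S = S * Z.map (Complex.ofReal)) :
    ∑ lam : I, ∑ mu : I, Z lam mu ≤ 1 / (S i0 i0).re ^ 2 := by
  have hx : ∀ lam : I, (((S lam i0).re : ℝ) : ℂ) = S lam i0 := by
    intro lam
    apply Complex.ext <;> simp [hreal lam]
  have hSstar : star S * S = 1 := hS.1
  have hkey : star S * (Z.map Complex.ofReal * S) = Z.map Complex.ofReal := by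
    rw [hcomm, ← mul_assoc, hSstar, one_mul]
  have h00 := congrFun (congrFun hkey i0) i0
  simp only [Matrix.mul_apply, Matrix.star_apply, Matrix.map_apply] at h00
  have hsum : ((∑ lam : I, ∑ mu : I,
      (S lam i0).re * Z lam mu * (S mu i0).re : ℝ) : ℂ) = 1 := by
    push_cast
    calc (∑ lam : I, ∑ mu : I,
          ((S lam i0).re : ℂ) * (Z lam mu : ℂ) * ((S mu i0).re : ℂ))
        = ∑ lam : I, star (S lam i0) * ∑ mu : I, (Z lam mu : ℂ) * S mu i0 := by
          refine Finset.sum_congr rfl fun lam _ => ?_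
          rw [Finset.mul_sum]
          refine Finset.sum_congr rfl fun mu _ => ?_
          rw [hx lam, hx mu, Complex.star_def, Complex.conj_eq_iff_im.mpr (hreal lam)]
          ring
      _ = ((Z i0 i0 : ℝ) : ℂ) := h00
      _ = 1 := by rw [hZ00]; norm_num
  have hsumR : ∑ lam : I, ∑ mu : I, (S lam i0).re * Z lam mu * (S mu i0).re = 1 := by
    exact_mod_cast hsum
  have hbound : (S i0 i0).re ^ 2 * (∑ lam : I, ∑ mu : I, Z lam mu) ≤ 1 := by
    rw [← hsumR, Finset.mul_sum]
    refine Finset.sum_le_sum fun lam _ => ?_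
    rw [Finset.mul_sum]
    refine Finset.sum_le_sum fun mu _ => ?_
    have h1 : (S i0 i0).re * (S i0 i0).re ≤ (S lam i0).re * (S mu i0).re :=
      mul_le_mul (hge lam) (hge mu) hpos.le (hpos.le.trans (hge lam))
    nlinarith [h1, hZnn lam mu]
  rw [le_div_iff₀ (by positivity)]
  linarith
end

section
/- Let I be a finite index set with a distinguished element 0, and let S be a unitary complex matrix indexed by I whose 0-column entries S_{λ,0} are real and satisfy S_{λ,0} ≥ S_{0,0} > 0 for all λ ∈ I. Then the set of all matrices Z indexed by I with non-negative integer entries satisfying Z_{0,0} = 1 and ZS = SZ is finite. -/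
/-- For a unitary matrix `S` indexed by a finite set `I` with distinguished
element `i0`, whose `i0`-column entries are real and satisfy `S λ i0 ≥ S i0 i0 > 0`, the
set of matrices `Z` with non-negative integer entries, `Z i0 i0 = 1` and `ZS = SZ`, is
finite. -/
theorem coupling_matrices_finite
    {I : Type*} [Fintype I] [DecidableEq I] (i0 : I)
    (S : Matrix I I ℂ) (hS : S ∈ Matrix.unitaryGroup I ℂ)
    (hreal : ∀ lam : I, (S lam i0).im = 0)
    (hpos : 0 < (S i0 i0).re)
    (hge : ∀ lam : I, (S i0 i0).re ≤ (S lam i0).re) :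
    {Z : Matrix I I ℕ | Z i0 i0 = 1 ∧
      Z.map (fun n : ℕ => (n : ℂ)) * S = S * Z.map (fun n : ℕ => (n : ℂ))}.Finite := by
  classical
  set s : ℝ := (S i0 i0).re with hs
  set N : ℕ := ⌈1 / s ^ 2⌉₊ with hNdef
  have hfin : {Z : Matrix I I ℕ | ∀ a b, Z a b ≤ N}.Finite := by
    apply Set.Finite.subset (Set.finite_range
      (fun M : Matrix I I (Fin (N + 1)) => (fun a b => (M a b : ℕ) : Matrix I I ℕ)))
    intro Z hZ
    exact ⟨fun a b => ⟨Z a b, Nat.lt_succ_of_le (hZ a b)⟩, rfl⟩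
  refine hfin.subset ?_
  rintro Z ⟨hZ1, hZ2⟩
  intro a b
  have hv : ∀ lam, 0 < (S lam i0).re := fun lam => lt_of_lt_of_le hpos (hge lam)
  have hScol : ∀ lam, S lam i0 = ((S lam i0).re : ℂ) := by
    intro lam
    exact Complex.ext (by simp) (by simp [hreal lam])
  have hstar : star S * S = 1 := hS.1
  have horth : ∀ mu, (∑ lam, S lam i0 * S lam mu) = if i0 = mu then 1 else 0 := by
    intro mu
    have h1 : (star S * S) i0 mu = (1 : Matrix I I ℂ) i0 mu := by rw [hstar]
    rw [Matrix.mul_apply] at h1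
    simp only [Matrix.star_apply, Matrix.one_apply] at h1
    calc ∑ lam, S lam i0 * S lam mu
        = ∑ lam, star (S lam i0) * S lam mu := by
          refine Finset.sum_congr rfl fun lam _ => ?_
          rw [hScol lam]
          simp
      _ = if i0 = mu then 1 else 0 := h1
  have key : (∑ lam, ∑ mu, S lam i0 * (Z lam mu : ℂ) * S mu i0) = 1 := by
    calc ∑ lam, ∑ mu, S lam i0 * (Z lam mu : ℂ) * S mu i0
        = ∑ lam, S lam i0 * ((Z.map (fun n : ℕ => (n : ℂ)) * S) lam i0) := by
          simp only [Matrix.mul_apply, Matrix.map_apply, Finset.mul_sum]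
          exact Finset.sum_congr rfl fun lam _ => Finset.sum_congr rfl fun mu _ => by ring
      _ = ∑ lam, S lam i0 * ((S * Z.map (fun n : ℕ => (n : ℂ))) lam i0) := by rw [hZ2]
      _ = ∑ mu, (Z mu i0 : ℂ) * ∑ lam, S lam i0 * S lam mu := by
          simp only [Matrix.mul_apply, Matrix.map_apply, Finset.mul_sum]
          rw [Finset.sum_comm]
          exact Finset.sum_congr rfl fun mu _ => Finset.sum_congr rfl fun lam _ => by ring
      _ = ∑ mu, (Z mu i0 : ℂ) * (if i0 = mu then 1 else 0) := by
          exact Finset.sum_congr rfl fun mu _ => by rw [horth mu]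
      _ = 1 := by simp [hZ1]
  have keyR : (∑ lam, ∑ mu, (S lam i0).re * (Z lam mu : ℝ) * (S mu i0).re) = 1 := by
    have h2 : ((∑ lam, ∑ mu, (S lam i0).re * (Z lam mu : ℝ) * (S mu i0).re : ℝ) : ℂ) = 1 := by
      push_cast
      rw [← key]
      exact Finset.sum_congr rfl fun lam _ => Finset.sum_congr rfl fun mu _ => by
        rw [hScol lam, hScol mu]
        push_cast [Complex.ofReal_re]
        ring
    exact_mod_cast h2
  have hnn : ∀ lam mu : I, 0 ≤ (S lam i0).re * (Z lam mu : ℝ) * (S mu i0).re := by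
    intro lam mu
    have := hv lam
    have := hv mu
    positivity
  have hterm : (S a i0).re * (Z a b : ℝ) * (S b i0).re ≤ 1 := by
    rw [← keyR]
    calc (S a i0).re * (Z a b : ℝ) * (S b i0).re
        ≤ ∑ mu, (S a i0).re * (Z a mu : ℝ) * (S mu i0).re :=
          Finset.single_le_sum (fun mu _ => hnn a mu) (Finset.mem_univ b)
      _ ≤ ∑ lam, ∑ mu, (S lam i0).re * (Z lam mu : ℝ) * (S mu i0).re :=
          Finset.single_le_sum
            (fun lam _ => Finset.sum_nonneg fun mu _ => hnn lam mu) (Finset.mem_univ a)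
  have hZR : (Z a b : ℝ) ≤ 1 / s ^ 2 := by
    have hs2 : (0 : ℝ) < s ^ 2 := by positivity
    rw [le_div_iff₀ hs2]
    have hza : (0 : ℝ) ≤ (Z a b : ℝ) := Nat.cast_nonneg _
    nlinarith [hge a, hge b, hv a, hv b,
      mul_le_mul_of_nonneg_left (hge b) (mul_nonneg hza hpos.le),
      mul_le_mul_of_nonneg_right (mul_le_mul_of_nonneg_left (hge a) hza) (hv b).le]
  have : (Z a b : ℝ) ≤ (N : ℝ) := hZR.trans (Nat.le_ceil _)
  exact_mod_cast this
end

section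
/- Let I be a finite index set with a distinguished element 0, and let S be a unitary, symmetric complex matrix indexed by I whose 0-column entries S_{λ,0} are real and strictly positive. Define quantum dimensions d_λ := S_{λ,0}/S_{0,0} and Verlinde numbers N_{λ,μ}^ν := Σ_{ρ∈I} S_{λ,ρ} S_{μ,ρ} conj(S_{ν,ρ}) / S_{0,ρ}, and assume every N_{λ,μ}^ν is a non-negative real number. If Z is a matrix indexed by I with non-negative real entries such that Z_{0,0} = 1 and ZS = SZ, then each entry satisfies Z_{λ,μ} ≤ d_λ d_μ. -/
/-!
Fix `λ` and let `N_λ` be the nonnegative matrix `(N_{λμ}^ν)_{μν}`. Unitarity of `S` turns the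
Verlinde formula into `N_λ S_{·ρ} = (S_{λρ} / S_{0ρ}) S_{·ρ}`, so the triangle inequality makes
`|S_{·ρ}|` a sub-eigenvector of `N_λ` with ratio `|S_{λρ}| / S_{0ρ}`, while the positive vector
`S_{·0}` is a left eigenvector of `N_λ` with eigenvalue `d_λ`. Pairing the two gives
`|S_{λρ}| ≤ d_λ S_{ρ0}`. As `Z` commutes with the unitary `S`, `Z = S Z S*`, hence
`Z_{λμ} ≤ ∑ |S_{λa}| Z_{ab} |S_{μb}| ≤ d_λ d_μ ∑ S_{a0} Z_{ab} S_{b0} = d_λ d_μ (S* Z S)_{00} = d_λ d_μ`.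
-/

open scoped ComplexConjugate ComplexOrder
open Matrix Finset

section

variable {I : Type*} [Fintype I]

theorem le_of_smul_le_mulVec_of_vecMul_eq_smul {A : Matrix I I ℝ} {v u : I → ℝ} {r c : ℝ}
    (hv : ∀ i, 0 < v i) (hu : 0 ≤ u) (hu0 : u ≠ 0) (hvA : v ᵥ* A = r • v)
    (hcu : c • u ≤ A *ᵥ u) : c ≤ r := by
  have hvu : 0 < v ⬝ᵥ u := by
    obtain ⟨i, hi⟩ := Function.ne_iff.mp hu0
    exact sum_pos' (fun j _ => mul_nonneg (hv j).le (hu j))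
      ⟨i, mem_univ _, mul_pos (hv i) ((hu i).lt_of_ne' hi)⟩
  refine le_of_mul_le_mul_right ?_ hvu
  calc c * (v ⬝ᵥ u) = v ⬝ᵥ (c • u) := by rw [dotProduct_smul, smul_eq_mul]
    _ ≤ v ⬝ᵥ (A *ᵥ u) := dotProduct_le_dotProduct_of_nonneg_left hcu fun i => (hv i).le
    _ = r * (v ⬝ᵥ u) := by rw [dotProduct_mulVec, hvA, smul_dotProduct, smul_eq_mul]

theorem Unitary.mul_mul_star_eq_of_commute {R : Type*} [Monoid R] [StarMul R] {U X : R}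
    (hU : U ∈ unitary R) (h : Commute X U) : U * X * star U = X := by
  rw [← h.eq, mul_assoc, Unitary.mul_star_self_of_mem hU, mul_one]

theorem Unitary.star_mul_mul_eq_of_commute {R : Type*} [Monoid R] [StarMul R] {U X : R}
    (hU : U ∈ unitary R) (h : Commute X U) : star U * X * U = X := by
  rw [mul_assoc, h.eq, ← mul_assoc, Unitary.star_mul_self_of_mem hU, one_mul]

noncomputable def verlinde (S : Matrix I I ℂ) (i0 lam mu nu : I) : ℂ :=
  ∑ rho, S lam rho * S mu rho * conj (S nu rho) / S i0 rho

section UnitaryGroup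

variable [DecidableEq I] {S : Matrix I I ℂ}

theorem sum_conj_mul_of_mem_unitaryGroup (hS : S ∈ unitaryGroup I ℂ) (i j : I) :
    ∑ n, conj (S n i) * S n j = if i = j then 1 else 0 := by
  simpa [mul_apply, one_apply] using congr_fun₂ (mem_unitaryGroup_iff'.mp hS) i j

theorem sum_verlinde_mul (hS : S ∈ unitaryGroup I ℂ) (i0 lam mu rho : I) :
    ∑ nu, verlinde S i0 lam mu nu * S nu rho = S lam rho * S mu rho / S i0 rho := by
  calc _ = ∑ r, S lam r * S mu r / S i0 r * ∑ n, conj (S n r) * S n rho := by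
        simp_rw [verlinde, sum_mul, mul_sum]
        rw [sum_comm]
        refine sum_congr rfl fun r _ => sum_congr rfl fun n _ => ?_
        ring
    _ = _ := by simp [sum_conj_mul_of_mem_unitaryGroup hS]

theorem sum_verlinde_mul_of_conj_eq {i0 : I} (hS : S ∈ unitaryGroup I ℂ)
    (hcol : ∀ a, conj (S a i0) = S a i0) (lam nu : I) :
    ∑ mu, verlinde S i0 lam mu nu * S mu i0 = S lam i0 * conj (S nu i0) / S i0 i0 := by
  calc _ = ∑ r, S lam r * conj (S nu r) / S i0 r * ∑ m, conj (S m i0) * S m r := by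
        simp_rw [verlinde, sum_mul, mul_sum]
        rw [sum_comm]
        refine sum_congr rfl fun r _ => sum_congr rfl fun m _ => ?_
        rw [hcol]
        ring
    _ = _ := by simp [sum_conj_mul_of_mem_unitaryGroup hS]

theorem exists_ne_zero_of_mem_unitaryGroup (hS : S ∈ unitaryGroup I ℂ) (rho : I) :
    ∃ n, S n rho ≠ 0 := by
  by_contra! h
  simpa [h] using sum_conj_mul_of_mem_unitaryGroup hS rho rho

theorem norm_le_of_verlinde_nonneg {i0 : I} (hS : S ∈ unitaryGroup I ℂ) (hsymm : Sᵀ = S)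
    {v : I → ℝ} (hcol : ∀ a, S a i0 = v a) (hv : ∀ a, 0 < v a)
    (hN : ∀ lam mu nu, 0 ≤ verlinde S i0 lam mu nu) (lam rho : I) :
    ‖S lam rho‖ ≤ v lam / v i0 * v rho := by
  set A : Matrix I I ℝ := fun mu nu => (verlinde S i0 lam mu nu).re
  set u : I → ℝ := fun n => ‖S n rho‖
  have hA : ∀ mu nu, ‖verlinde S i0 lam mu nu‖ = A mu nu := fun mu nu => by
    simpa using congr_arg Complex.re (Complex.eq_coe_norm_of_nonneg (hN lam mu nu)).symm
  have hvA : v ᵥ* A = (v lam / v i0) • v := funext fun nu => by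
    have h := congr_arg Complex.re <| sum_verlinde_mul_of_conj_eq hS
      (fun a => by rw [hcol, Complex.conj_ofReal]) lam nu
    simp only [hcol, Complex.re_sum, Complex.re_mul_ofReal, Complex.conj_ofReal] at h
    norm_cast at h
    simp only [vecMul, dotProduct, Pi.smul_apply, smul_eq_mul, A, mul_comm (v _)]
    rw [h]
    ring
  have hcu : (‖S lam rho‖ / v rho) • u ≤ A *ᵥ u := fun mu => by
    have hS0 : S i0 rho = v rho := by rw [← hsymm, transpose_apply, hcol]
    calc (‖S lam rho‖ / v rho) * u mu = ‖∑ nu, verlinde S i0 lam mu nu * S nu rho‖ := by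
          rw [sum_verlinde_mul hS, norm_div, norm_mul, hS0, Complex.norm_of_nonneg (hv rho).le]
          ring
      _ ≤ ∑ nu, ‖verlinde S i0 lam mu nu * S nu rho‖ := norm_sum_le _ _
      _ = (A *ᵥ u) mu := by simp [mulVec, dotProduct, hA, u]
  have hu0 : u ≠ 0 := fun h0 => by
    obtain ⟨n, hn⟩ := exists_ne_zero_of_mem_unitaryGroup hS rho
    exact hn (norm_eq_zero.mp (congr_fun h0 n))
  have := le_of_smul_le_mulVec_of_vecMul_eq_smul hv (fun n => norm_nonneg _) hu0 hvA hcu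
  rwa [div_le_iff₀ (hv rho)] at this

end UnitaryGroup

theorem norm_mul_mul_star_apply_le {S : Matrix I I ℂ} {Z : Matrix I I ℝ} (hZ : ∀ a b, 0 ≤ Z a b)
    {x w : I → ℝ} (hS : ∀ a b, ‖S a b‖ ≤ x a * w b) (lam mu : I) :
    ‖(S * Z.map Complex.ofReal * star S) lam mu‖ ≤ x lam * x mu * (w ⬝ᵥ Z *ᵥ w) := by
  calc ‖(S * Z.map Complex.ofReal * star S) lam mu‖
        = ‖∑ a, ∑ b, S lam a * Z a b * conj (S mu b)‖ := by
          simp only [mul_apply, sum_mul, map_apply, star_apply]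
          rw [sum_comm]
          rfl
    _ ≤ ∑ a, ∑ b, ‖S lam a‖ * Z a b * ‖S mu b‖ := by
        refine (norm_sum_le _ _).trans (sum_le_sum fun a _ => (norm_sum_le _ _).trans_eq ?_)
        simp [abs_of_nonneg (hZ _ _)]
    _ ≤ ∑ a, ∑ b, x lam * w a * Z a b * (x mu * w b) := by
        gcongr with a _ b _
        · exact mul_nonneg ((norm_nonneg _).trans (hS lam a)) (hZ a b)
        · exact hZ a b
        · exact hS lam a
        · exact hS mu b
    _ = x lam * x mu * (w ⬝ᵥ Z *ᵥ w) := by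
        simp only [dotProduct, mulVec, mul_sum]
        refine sum_congr rfl fun a _ => sum_congr rfl fun b _ => ?_
        ring

theorem star_mul_mul_apply_eq_dotProduct {S : Matrix I I ℂ} {Z : Matrix I I ℝ} {v : I → ℝ}
    {i0 : I} (hcol : ∀ a, S a i0 = v a) :
    (star S * Z.map Complex.ofReal * S) i0 i0 = ↑(v ⬝ᵥ Z *ᵥ v) := by
  simp only [mul_apply, star_apply, map_apply, hcol, dotProduct, mulVec, sum_mul, mul_sum]
  push_cast
  rw [sum_comm]
  simp [mul_assoc]

end

/-- For a unitary symmetric matrix `S` with real strictly positive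
`i0`-column, quantum dimensions `d λ = S λ i0 / S i0 i0` and non-negative real Verlinde
numbers `N λ μ ν = Σ_ρ S λ ρ * S μ ρ * conj (S ν ρ) / S i0 ρ`, every coupling matrix `Z`
(non-negative entries, `Z i0 i0 = 1`, `ZS = SZ`) satisfies `Z λ μ ≤ d λ * d μ`. -/
theorem coupling_matrix_entry_bound
    {I : Type*} [Fintype I] [DecidableEq I] (i0 : I)
    (S : Matrix I I ℂ) (hS : S ∈ Matrix.unitaryGroup I ℂ)
    (hsymm : S.transpose = S)
    (hreal : ∀ lam : I, (S lam i0).im = 0)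
    (hpos : ∀ lam : I, 0 < (S lam i0).re)
    (d : I → ℝ) (hd : ∀ lam : I, d lam = (S lam i0).re / (S i0 i0).re)
    (N : I → I → I → ℂ)
    (hN : ∀ lam mu nu : I,
      N lam mu nu = ∑ rho : I, S lam rho * S mu rho * conj (S nu rho) / S i0 rho)
    (hNnn : ∀ lam mu nu : I, (N lam mu nu).im = 0 ∧ 0 ≤ (N lam mu nu).re)
    (Z : Matrix I I ℝ)
    (hZnn : ∀ lam mu : I, 0 ≤ Z lam mu)
    (hZ00 : Z i0 i0 = 1)
    (hcomm : Z.map (Complex.ofReal) * S = S * Z.map (Complex.ofReal)) :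
    ∀ lam mu : I, Z lam mu ≤ d lam * d mu := by
  intro lam mu
  set v : I → ℝ := fun a => (S a i0).re
  have hcol : ∀ a, S a i0 = v a := fun a => Complex.ext rfl (hreal a)
  obtain rfl : N = verlinde S i0 := by
    funext lam mu nu
    exact hN lam mu nu
  have hSle : ∀ a b, ‖S a b‖ ≤ d a * v b := by
    simpa only [hd] using norm_le_of_verlinde_nonneg hS hsymm hcol hpos
      fun lam mu nu => Complex.nonneg_iff.mpr ⟨(hNnn lam mu nu).2, (hNnn lam mu nu).1.symm⟩
  have hvZv : v ⬝ᵥ Z *ᵥ v = 1 := by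
    have h := star_mul_mul_apply_eq_dotProduct (Z := Z) hcol
    rw [Unitary.star_mul_mul_eq_of_commute hS hcomm, map_apply, hZ00] at h
    exact_mod_cast h.symm
  calc Z lam mu ≤ ‖Z.map Complex.ofReal lam mu‖ := by simpa using le_abs_self (Z lam mu)
    _ = ‖(S * Z.map Complex.ofReal * star S) lam mu‖ := by
        rw [Unitary.mul_mul_star_eq_of_commute hS hcomm]
    _ ≤ d lam * d mu * (v ⬝ᵥ Z *ᵥ v) := norm_mul_mul_star_apply_le hZnn hSle lam mu
    _ = d lam * d mu := by rw [hvZv, mul_one]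
end

section
/- Let I be a finite index set with a distinguished element 0, and let S be a unitary, symmetric complex matrix indexed by I whose 0-column entries S_{λ,0} are real and strictly positive. If Z is a matrix indexed by I with non-negative real entries such that Z_{0,0} = 1 and ZS = SZ, then the vacuum column of Z is trivial if and only if the vacuum row of Z is trivial; that is, (Z_{λ,0} = δ_{λ,0} for all λ ∈ I) holds if and only if (Z_{0,μ} = δ_{0,μ} for all μ ∈ I) holds. -/
/-- For a unitary symmetric matrix `S` with real strictly positive
`i0`-column, and a coupling matrix `Z` (non-negative real entries, `Z i0 i0 = 1`,
`ZS = SZ`), the vacuum column of `Z` is trivial iff the vacuum row of `Z` is trivial. -/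
theorem coupling_matrix_vacuum_column_trivial_iff_row_trivial
    {I : Type*} [Fintype I] [DecidableEq I] (i0 : I)
    (S : Matrix I I ℂ) (hS : S ∈ Matrix.unitaryGroup I ℂ)
    (hsymm : S.transpose = S)
    (hreal : ∀ lam : I, (S lam i0).im = 0)
    (hpos : ∀ lam : I, 0 < (S lam i0).re)
    (Z : Matrix I I ℝ)
    (hZnn : ∀ lam mu : I, 0 ≤ Z lam mu)
    (hZ00 : Z i0 i0 = 1)
    (hcomm : Z.map (Complex.ofReal) * S = S * Z.map (Complex.ofReal)) :
    (∀ lam : I, Z lam i0 = if lam = i0 then 1 else 0) ↔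
      (∀ mu : I, Z i0 mu = if i0 = mu then 1 else 0) := by
  -- S i0 j = S j i0 by symmetry
  have hsym : ∀ j, S i0 j = S j i0 := by
    intro j
    conv_lhs => rw [← hsymm]
    rfl
  -- the (i0,i0) entry of the commutation relation
  have h := Matrix.ext_iff.mpr hcomm i0 i0
  rw [Matrix.mul_apply, Matrix.mul_apply] at h
  have hre := congrArg Complex.re h
  simp only [Complex.re_sum, Matrix.map_apply, Complex.mul_re, Complex.ofReal_re,
    Complex.ofReal_im, zero_mul, sub_zero, mul_zero] at hre
  -- hre : ∑ j, Z i0 j * (S j i0).re = ∑ j, (S i0 j).re * Z j i0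
  have key : ∑ j, Z i0 j * (S j i0).re = ∑ j, (S j i0).re * Z j i0 := by
    rw [hre]
    exact Finset.sum_congr rfl fun j _ => by rw [hsym j]
  constructor
  · intro hcol mu
    have hR : ∑ j, (S j i0).re * Z j i0 = (S i0 i0).re := by
      rw [Finset.sum_eq_single i0]
      · rw [hcol i0, if_pos rfl, mul_one]
      · intro b _ hb
        rw [hcol b, if_neg hb, mul_zero]
      · intro habs; exact absurd (Finset.mem_univ i0) habs
    have hL : ∑ j, Z i0 j * (S j i0).re = (S i0 i0).re := key.trans hR
    have hsplit : Z i0 i0 * (S i0 i0).re +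
        ∑ j ∈ Finset.univ.erase i0, Z i0 j * (S j i0).re = (S i0 i0).re := by
      rw [Finset.add_sum_erase _ (fun j => Z i0 j * (S j i0).re) (Finset.mem_univ i0)]
      exact hL
    rw [hZ00, one_mul] at hsplit
    have hzero : ∑ j ∈ Finset.univ.erase i0, Z i0 j * (S j i0).re = 0 := by linarith
    have hterms := (Finset.sum_eq_zero_iff_of_nonneg
      (fun j _ => mul_nonneg (hZnn i0 j) (hpos j).le)).mp hzero
    by_cases hmu : i0 = mu
    · simp [← hmu, hZ00]
    · rw [if_neg hmu]
      have := hterms mu (Finset.mem_erase.mpr ⟨fun hc => hmu hc.symm, Finset.mem_univ mu⟩)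
      exact (mul_eq_zero.mp this).resolve_right (hpos mu).ne'
  · intro hrow lam
    have hL : ∑ j, Z i0 j * (S j i0).re = (S i0 i0).re := by
      rw [Finset.sum_eq_single i0]
      · rw [hrow i0, if_pos rfl, one_mul]
      · intro b _ hb
        rw [hrow b, if_neg (fun hc => hb hc.symm), zero_mul]
      · intro habs; exact absurd (Finset.mem_univ i0) habs
    have hR : ∑ j, (S j i0).re * Z j i0 = (S i0 i0).re := key.symm.trans hL
    have hsplit : (S i0 i0).re * Z i0 i0 +
        ∑ j ∈ Finset.univ.erase i0, (S j i0).re * Z j i0 = (S i0 i0).re := by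
      rw [Finset.add_sum_erase _ (fun j => (S j i0).re * Z j i0) (Finset.mem_univ i0)]
      exact hR
    rw [hZ00, mul_one] at hsplit
    have hzero : ∑ j ∈ Finset.univ.erase i0, (S j i0).re * Z j i0 = 0 := by linarith
    have hterms := (Finset.sum_eq_zero_iff_of_nonneg
      (fun j _ => mul_nonneg (hpos j).le (hZnn j i0))).mp hzero
    by_cases hlam : lam = i0
    · simp [hlam, hZ00]
    · rw [if_neg hlam]
      have := hterms lam (Finset.mem_erase.mpr ⟨hlam, Finset.mem_univ lam⟩)
      exact (mul_eq_zero.mp this).resolve_left (hpos lam).ne'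
end

section
/- Let I be a finite index set with a distinguished element 0, and let S be a unitary, symmetric complex matrix indexed by I whose 0-column entries S_{λ,0} are real and strictly positive. Suppose Z is a matrix indexed by I with non-negative integer entries such that ZS = SZ and Z_{λ,0} = δ_{λ,0} for all λ ∈ I. Then Z is a permutation matrix: there exists a bijection ϑ : I → I with ϑ(0) = 0 such that Z_{λ,μ} = δ_{μ,ϑ(λ)} for all λ, μ ∈ I; moreover ϑ is a symmetry of S, i.e. S_{ϑ(λ),ϑ(μ)} = S_{λ,μ} for all λ, μ ∈ I (hence ϑ preserves the Verlinde fusion coefficients N_{λ,μ}^ν = Σ_ρ S_{λ,ρ}S_{μ,ρ}conj(S_{ν,ρ})/S_{0,ρ}). -/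
open scoped ComplexConjugate

/-- A family of naturals summing to one has exactly one member equal to one. -/
lemma aux_nat_sum_eq_one {I : Type*} [Fintype I] [DecidableEq I] (f : I → ℕ)
    (h : ∑ i, f i = 1) : ∃ a, f a = 1 ∧ ∀ b, b ≠ a → f b = 0 := by
  have hne : ∃ a, f a ≠ 0 := by
    by_contra hall
    push_neg at hall
    simp [hall] at h
  obtain ⟨a, ha⟩ := hne
  have hle : f a ≤ 1 := h ▸ Finset.single_le_sum (fun i _ => Nat.zero_le _) (Finset.mem_univ a)
  have hfa : f a = 1 := le_antisymm hle (Nat.one_le_iff_ne_zero.2 ha)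
  refine ⟨a, hfa, fun b hb => ?_⟩
  have hrest : ∑ i ∈ Finset.univ.erase a, f i = 0 := by
    have := Finset.add_sum_erase Finset.univ f (Finset.mem_univ a)
    omega
  have := (Finset.sum_eq_zero_iff).1 hrest b (Finset.mem_erase.2 ⟨hb, Finset.mem_univ b⟩)
  exact this

/-- For a unitary symmetric matrix `S` with real strictly positive
`i0`-column, a matrix `Z` with non-negative integer entries commuting with `S` and
with trivial vacuum column `Z λ i0 = δ_{λ,i0}` is a permutation matrix given by a
bijection `ϑ` fixing `i0` which is a symmetry of `S` (and hence preserves the Verlinde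
fusion coefficients). -/
theorem coupling_matrix_trivial_vacuum_column_is_permutation
    {I : Type*} [Fintype I] [DecidableEq I] (i0 : I)
    (S : Matrix I I ℂ) (hS : S ∈ Matrix.unitaryGroup I ℂ)
    (hsymm : S.transpose = S)
    (hreal : ∀ lam : I, (S lam i0).im = 0)
    (hpos : ∀ lam : I, 0 < (S lam i0).re)
    (Z : Matrix I I ℕ)
    (hcomm : Z.map (fun n : ℕ => (n : ℂ)) * S = S * Z.map (fun n : ℕ => (n : ℂ)))
    (hvac : ∀ lam : I, Z lam i0 = if lam = i0 then 1 else 0) :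
    ∃ θ : Equiv.Perm I, θ i0 = i0 ∧
      (∀ lam mu : I, Z lam mu = if mu = θ lam then 1 else 0) ∧
      (∀ lam mu : I, S (θ lam) (θ mu) = S lam mu) ∧
      (∀ lam mu nu : I,
        ∑ rho : I, S (θ lam) rho * S (θ mu) rho * conj (S (θ nu) rho) / S i0 rho =
          ∑ rho : I, S lam rho * S mu rho * conj (S nu rho) / S i0 rho) := by
  classical
  set d : I → ℝ := fun lam => (S lam i0).re with hd
  have hdpos : ∀ lam, 0 < d lam := hpos
  have hSd : ∀ lam, S lam i0 = (d lam : ℂ) := by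
    intro lam
    apply Complex.ext
    · simp [d]
    · simp [hreal lam]
  have hSsymm : ∀ a b, S a b = S b a := by
    intro a b
    conv_lhs => rw [← hsymm]
    rfl
  -- entrywise version of the commutation relation
  have hcomm' : ∀ lam nu, ∑ mu, (Z lam mu : ℂ) * S mu nu = ∑ mu, S lam mu * (Z mu nu : ℂ) := by
    intro lam nu
    have := congrFun (congrFun hcomm lam) nu
    simpa [Matrix.mul_apply, Matrix.map_apply] using this
  -- Z fixes the positive vector d (rows)
  have hrow : ∀ lam, ∑ mu, (Z lam mu : ℝ) * d mu = d lam := by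
    intro lam
    have h := hcomm' lam i0
    have hR : ∑ mu, S lam mu * (Z mu i0 : ℂ) = (d lam : ℂ) := by
      rw [Finset.sum_eq_single i0]
      · simp [hvac, hSd]
      · intro b _ hb; simp [hvac, hb]
      · simp
    rw [hR] at h
    have h2 : ((∑ mu, (Z lam mu : ℝ) * d mu : ℝ) : ℂ) = ((d lam : ℝ) : ℂ) := by
      push_cast
      rw [← h]
      exact Finset.sum_congr rfl fun mu _ => by rw [hSd]
    exact_mod_cast h2
  -- the vacuum row of Z is also trivial
  have hrow0 : ∀ mu, Z i0 mu = if mu = i0 then 1 else 0 := by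
    intro mu
    by_cases hmu : mu = i0
    · simpa [hmu] using hvac i0
    · simp only [hmu, if_false]
      have key : ∑ nu ∈ Finset.univ.erase i0, (Z i0 nu : ℝ) * d nu = 0 := by
        have h := hrow i0
        rw [← Finset.add_sum_erase Finset.univ _ (Finset.mem_univ i0)] at h
        have hz : Z i0 i0 = 1 := by simpa using hvac i0
        rw [hz] at h
        push_cast at h
        linarith
      have hterm := (Finset.sum_eq_zero_iff_of_nonneg
        (fun nu _ => mul_nonneg (Nat.cast_nonneg _) (hdpos nu).le)).1 key mu
        (Finset.mem_erase.2 ⟨hmu, Finset.mem_univ mu⟩)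
      have := mul_eq_zero.1 hterm
      rcases this with h0 | h0
      · exact_mod_cast h0
      · exact absurd h0 (hdpos mu).ne'
  -- Z fixes d also on columns
  have hcol : ∀ mu, ∑ lam, (Z lam mu : ℝ) * d lam = d mu := by
    intro mu
    have h := hcomm' i0 mu
    have hL : ∑ nu, (Z i0 nu : ℂ) * S nu mu = S i0 mu := by
      rw [Finset.sum_eq_single i0]
      · simp [hrow0]
      · intro b _ hb; simp [hrow0, hb]
      · simp
    rw [hL] at h
    have h2 : ((∑ lam, (Z lam mu : ℝ) * d lam : ℝ) : ℂ) = ((d mu : ℝ) : ℂ) := by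
      push_cast
      rw [← hSd mu, hSsymm mu i0, h]
      refine Finset.sum_congr rfl fun lam _ => ?_
      rw [hSsymm i0 lam, hSd lam, mul_comm]
    exact_mod_cast h2
  -- row and column sums of Z
  have hrowpos : ∀ lam, 1 ≤ ∑ mu, Z lam mu := by
    intro lam
    by_contra h
    push_neg at h
    have h0 : ∑ mu, Z lam mu = 0 := by omega
    have hall : ∀ mu, Z lam mu = 0 := fun mu =>
      (Finset.sum_eq_zero_iff).1 h0 mu (Finset.mem_univ mu)
    have h1 := hrow lam
    rw [Finset.sum_eq_zero (fun mu _ => by simp [hall mu])] at h1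
    exact absurd h1.symm (hdpos lam).ne'
  have hcolpos : ∀ mu, 1 ≤ ∑ lam, Z lam mu := by
    intro mu
    by_contra h
    push_neg at h
    have h0 : ∑ lam, Z lam mu = 0 := by omega
    have hall : ∀ lam, Z lam mu = 0 := fun lam =>
      (Finset.sum_eq_zero_iff).1 h0 lam (Finset.mem_univ lam)
    have h1 := hcol mu
    rw [Finset.sum_eq_zero (fun lam _ => by simp [hall lam])] at h1
    exact absurd h1.symm (hdpos mu).ne'
  -- column sums are exactly one
  have hcolsum : ∀ mu, ∑ lam, Z lam mu = 1 := by
    have hsum : ∑ mu, ((∑ lam, Z lam mu : ℕ) : ℝ) * d mu = ∑ mu, d mu := by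
      calc ∑ mu, ((∑ lam, Z lam mu : ℕ) : ℝ) * d mu
          = ∑ mu, ∑ lam, (Z lam mu : ℝ) * d mu := by
            refine Finset.sum_congr rfl fun mu _ => ?_
            push_cast
            rw [Finset.sum_mul]
        _ = ∑ lam, ∑ mu, (Z lam mu : ℝ) * d mu := Finset.sum_comm
        _ = ∑ lam, d lam := Finset.sum_congr rfl fun lam _ => hrow lam
    have hzero : ∑ mu, (((∑ lam, Z lam mu : ℕ) : ℝ) - 1) * d mu = 0 := by
      have : ∑ mu, (((∑ lam, Z lam mu : ℕ) : ℝ) - 1) * d mu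
          = (∑ mu, ((∑ lam, Z lam mu : ℕ) : ℝ) * d mu) - ∑ mu, d mu := by
        rw [← Finset.sum_sub_distrib]
        refine Finset.sum_congr rfl fun mu _ => by ring
      rw [this, hsum, sub_self]
    intro mu
    have hterm := (Finset.sum_eq_zero_iff_of_nonneg (fun nu _ => by
      have h1 : (1 : ℝ) ≤ ((∑ lam, Z lam nu : ℕ) : ℝ) := by exact_mod_cast hcolpos nu
      exact mul_nonneg (by linarith) (hdpos nu).le)).1 hzero mu (Finset.mem_univ mu)
    rcases mul_eq_zero.1 hterm with h0 | h0
    · have : ((∑ lam, Z lam mu : ℕ) : ℝ) = 1 := by linarith [sub_eq_zero.1 h0]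
      exact_mod_cast this
    · exact absurd h0 (hdpos mu).ne'
  -- row sums are exactly one
  have hrowsum : ∀ lam, ∑ mu, Z lam mu = 1 := by
    have hsum : ∑ lam, ((∑ mu, Z lam mu : ℕ) : ℝ) * d lam = ∑ lam, d lam := by
      calc ∑ lam, ((∑ mu, Z lam mu : ℕ) : ℝ) * d lam
          = ∑ lam, ∑ mu, (Z lam mu : ℝ) * d lam := by
            refine Finset.sum_congr rfl fun lam _ => ?_
            push_cast
            rw [Finset.sum_mul]
        _ = ∑ mu, ∑ lam, (Z lam mu : ℝ) * d lam := Finset.sum_comm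
        _ = ∑ mu, d mu := Finset.sum_congr rfl fun mu _ => hcol mu
    have hzero : ∑ lam, (((∑ mu, Z lam mu : ℕ) : ℝ) - 1) * d lam = 0 := by
      have : ∑ lam, (((∑ mu, Z lam mu : ℕ) : ℝ) - 1) * d lam
          = (∑ lam, ((∑ mu, Z lam mu : ℕ) : ℝ) * d lam) - ∑ lam, d lam := by
        rw [← Finset.sum_sub_distrib]
        refine Finset.sum_congr rfl fun lam _ => by ring
      rw [this, hsum, sub_self]
    intro lam
    have hterm := (Finset.sum_eq_zero_iff_of_nonneg (fun nu _ => by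
      have h1 : (1 : ℝ) ≤ ((∑ mu, Z nu mu : ℕ) : ℝ) := by exact_mod_cast hrowpos nu
      exact mul_nonneg (by linarith) (hdpos nu).le)).1 hzero lam (Finset.mem_univ lam)
    rcases mul_eq_zero.1 hterm with h0 | h0
    · have : ((∑ mu, Z lam mu : ℕ) : ℝ) = 1 := by linarith [sub_eq_zero.1 h0]
      exact_mod_cast this
    · exact absurd h0 (hdpos lam).ne'
  -- extract the permutation
  choose t ht1 ht0 using fun lam => aux_nat_sum_eq_one (Z lam) (hrowsum lam)
  have hinj : Function.Injective t := by
    intro a b hab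
    by_contra hne
    have h1 : (1 : ℕ) = ∑ lam, Z lam (t a) := (hcolsum (t a)).symm
    rw [← Finset.add_sum_erase Finset.univ _ (Finset.mem_univ a)] at h1
    have h2 : Z b (t a) ≤ ∑ lam ∈ Finset.univ.erase a, Z lam (t a) :=
      Finset.single_le_sum (f := fun lam => Z lam (t a)) (fun i _ => Nat.zero_le _)
        (Finset.mem_erase.2 ⟨fun h => hne h.symm, Finset.mem_univ b⟩)
    have hZb : Z b (t a) = 1 := by rw [hab]; exact ht1 b
    have hZa : Z a (t a) = 1 := ht1 a
    omega
  let θ : Equiv.Perm I := Equiv.ofBijective t (Finite.injective_iff_bijective.1 hinj)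
  have hθ : ∀ lam, θ lam = t lam := fun _ => rfl
  have hZθ : ∀ lam mu, Z lam mu = if mu = θ lam then 1 else 0 := by
    intro lam mu
    by_cases h : mu = θ lam
    · rw [h, if_pos rfl, hθ]; exact ht1 lam
    · rw [if_neg h]; exact ht0 lam mu h
  have hθ0 : θ i0 = i0 := by
    by_contra h
    have := hZθ i0 i0
    rw [if_neg (fun hh => h hh.symm)] at this
    rw [hvac i0] at this
    simp at this
  -- symmetry of S
  have hS1 : ∀ lam nu, S (θ lam) nu = S lam (θ.symm nu) := by
    intro lam nu
    have h := hcomm' lam nu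
    have hL : ∑ mu, (Z lam mu : ℂ) * S mu nu = S (θ lam) nu := by
      rw [Finset.sum_eq_single (θ lam)]
      · rw [hZθ, if_pos rfl]; simp
      · intro b _ hb; rw [hZθ, if_neg hb]; simp
      · simp
    have hR : ∑ mu, S lam mu * (Z mu nu : ℂ) = S lam (θ.symm nu) := by
      rw [Finset.sum_eq_single (θ.symm nu)]
      · rw [hZθ, Equiv.apply_symm_apply, if_pos rfl]; simp
      · intro b _ hb
        rw [hZθ, if_neg]
        · simp
        · intro hh
          exact hb (by rw [hh, Equiv.symm_apply_apply])
      · simp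
    rw [hL, hR] at h
    exact h
  have hSθ : ∀ lam mu, S (θ lam) (θ mu) = S lam mu := by
    intro lam mu
    rw [hS1, Equiv.symm_apply_apply]
  refine ⟨θ, hθ0, hZθ, hSθ, ?_⟩
  intro lam mu nu
  refine Fintype.sum_equiv θ.symm _ _ fun rho => ?_
  rw [hS1 lam, hS1 mu, hS1 nu]
  congr 1
  conv_lhs => rw [← hθ0]
  rw [hS1 i0]
end

section
/- Let I be a finite index set with a distinguished element 0. Let S be a unitary, symmetric complex matrix indexed by I whose 0-column entries S_{λ,0} are real and strictly positive, and let T be a diagonal unitary matrix with T_{λ,λ} = t·exp(2πi h_λ), where |t| = 1, h_λ ∈ ℝ and h_0 = 0. Assume the modular relation (ST)^3 = S^2. Define d_ρ := S_{ρ,0}/S_{0,0} and N_{λ,μ}^ρ := Σ_{σ∈I} S_{λ,σ} S_{μ,σ} conj(S_{ρ,σ}) / S_{0,σ}. Then for all λ, μ ∈ I: S_{λ,μ} = S_{0,0} · Σ_{ρ∈I} exp(2πi(h_λ + h_μ − h_ρ)) · N_{λ,μ}^ρ · d_ρ. -/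
/-!
Write `T = diag w` with `w_ρ = t e^{2πi h_ρ}`, so `|w_ρ| = 1` and the phase in the formula is
`w_λ w_μ / (w_0 w_ρ)`. Cancelling `S` on the left, `(ST)³ = S²` becomes `TSTST = S`, i.e.
`w_a w_b Σ_σ S_{aσ} w_σ S_{σb} = S_{ab}`. Taking `a = 0` and complex conjugates (using `|w| = 1` and
the reality of the `0`-row) gives `Σ_ρ S_{ρ0} w_ρ⁻¹ conj S_{ρσ} = w_0 w_σ S_{0σ}`. This is exactly
the sum over `ρ` left after exchanging the two sums in the right-hand side, and the identity for
`(a, b) = (λ, μ)` then closes the computation.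
-/

open scoped ComplexConjugate Real
open Finset

theorem mul_mul_mul_mul_eq_self_of_mul_pow_three_eq_sq {R : Type*} [Monoid R] {S T : R}
    (hS : IsLeftRegular S) (hmod : (S * T) ^ 3 = S ^ 2) : T * S * T * S * T = S :=
  hS <| by simpa only [pow_three, sq, mul_assoc] using hmod

namespace Matrix

variable {I : Type*} [Fintype I] [DecidableEq I]

theorem diagonal_mul_mul_diagonal_mul_mul_diagonal_apply {α : Type*} [CommSemiring α]
    (w : I → α) (A B : Matrix I I α) (a b : I) :
    (diagonal w * A * diagonal w * B * diagonal w) a b =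
      w a * w b * ∑ σ, A a σ * w σ * B σ b := by
  simp only [mul_diagonal, mul_apply (M := _ * diagonal w), diagonal_mul, mul_sum, sum_mul]
  exact sum_congr rfl fun σ _ => by ring

variable {S : Matrix I I ℂ} {w : I → ℂ}

theorem mul_mul_sum_eq_of_mul_diagonal_pow_three_eq_sq (hS : S ∈ unitaryGroup I ℂ)
    (hmod : (S * diagonal w) ^ 3 = S ^ 2) (a b : I) :
    w a * w b * ∑ σ, S a σ * w σ * S σ b = S a b := by
  have hTST := mul_mul_mul_mul_eq_self_of_mul_pow_three_eq_sq
    (isLeftRegular_of_mul_eq_one (Unitary.star_mul_self_of_mem hS)) hmod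
  rw [← diagonal_mul_mul_diagonal_mul_mul_diagonal_apply, hTST]

theorem sum_mul_inv_mul_conj_eq_of_mul_diagonal_pow_three_eq_sq (i0 : I)
    (hS : S ∈ unitaryGroup I ℂ) (hsymm : Sᵀ = S) (hreal : ∀ ρ, conj (S ρ i0) = S ρ i0)
    (hw : ∀ ρ, ‖w ρ‖ = 1) (hmod : (S * diagonal w) ^ 3 = S ^ 2) (σ : I) :
    ∑ ρ, S ρ i0 * (w ρ)⁻¹ * conj (S ρ σ) = w i0 * w σ * S i0 σ := by
  have hrow : ∀ ρ, conj (S i0 ρ) = S ρ i0 := fun ρ => by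
    rw [← hreal, ← transpose_apply S, hsymm]
  have hconj := congrArg conj (mul_mul_sum_eq_of_mul_diagonal_pow_three_eq_sq hS hmod i0 σ)
  simp only [map_mul, map_sum, ← Complex.inv_eq_conj (hw _), hrow] at hconj
  rw [← transpose_apply S σ i0, hsymm, ← hconj]
  have hw0 : ∀ ρ, w ρ ≠ 0 := fun ρ => norm_ne_zero_iff.mp (by simp [hw])
  field_simp [hw0]

theorem apply_eq_mul_sum_verlinde_of_mul_diagonal_pow_three_eq_sq (i0 : I)
    (hS : S ∈ unitaryGroup I ℂ) (hsymm : Sᵀ = S) (hreal : ∀ ρ, conj (S ρ i0) = S ρ i0)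
    (hne : ∀ ρ, S ρ i0 ≠ 0) (hw : ∀ ρ, ‖w ρ‖ = 1) (hmod : (S * diagonal w) ^ 3 = S ^ 2)
    (lam mu : I) :
    S lam mu = S i0 i0 * ∑ ρ, w lam * w mu / (w i0 * w ρ) *
      (∑ σ, S lam σ * S mu σ * conj (S ρ σ) / S i0 σ) * (S ρ i0 / S i0 i0) := by
  have hsymm' : ∀ a b, S a b = S b a := fun a b => by rw [← transpose_apply S a b, hsymm]
  have hw0 : ∀ ρ, w ρ ≠ 0 := fun ρ => norm_ne_zero_iff.mp (by simp [hw])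
  have hrow : ∀ σ, S i0 σ ≠ 0 := fun σ => hsymm' i0 σ ▸ hne σ
  symm
  calc S i0 i0 * ∑ ρ, w lam * w mu / (w i0 * w ρ) *
        (∑ σ, S lam σ * S mu σ * conj (S ρ σ) / S i0 σ) * (S ρ i0 / S i0 i0)
      = w lam * w mu / w i0 * ∑ σ, S lam σ * S mu σ / S i0 σ *
          ∑ ρ, S ρ i0 * (w ρ)⁻¹ * conj (S ρ σ) := by
        simp only [mul_sum, sum_mul]
        rw [sum_comm]
        refine sum_congr rfl fun σ _ => sum_congr rfl fun ρ _ => ?_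
        field_simp [hw0, hrow]
    _ = w lam * w mu / w i0 * ∑ σ, S lam σ * S mu σ / S i0 σ * (w i0 * w σ * S i0 σ) := by
        simp only [sum_mul_inv_mul_conj_eq_of_mul_diagonal_pow_three_eq_sq i0 hS hsymm hreal hw
          hmod]
    _ = w lam * w mu * ∑ σ, S lam σ * w σ * S σ mu := by
        rw [mul_sum, mul_sum]
        refine sum_congr rfl fun σ _ => ?_
        rw [hsymm' σ mu]
        field_simp [hw0, hrow]
    _ = S lam mu := mul_mul_sum_eq_of_mul_diagonal_pow_three_eq_sq hS hmod lam mu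

end Matrix

/-- If `S` is unitary and symmetric with real strictly positive `i0`-column,
`T = diagonal (t · exp(2πi h λ))` with `|t| = 1` and `h i0 = 0`, and `(ST)^3 = S^2`, then
`S λ μ = S i0 i0 · Σ_ρ exp(2πi(h λ + h μ − h ρ)) · N λ μ ρ · d ρ` with the Verlinde
numbers `N` and quantum dimensions `d`. -/
theorem S_matrix_formula_from_modular_relation
    {I : Type*} [Fintype I] [DecidableEq I] (i0 : I)
    (S T : Matrix I I ℂ) (hS : S ∈ Matrix.unitaryGroup I ℂ)
    (hsymm : S.transpose = S)
    (hreal : ∀ lam : I, (S lam i0).im = 0)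
    (hpos : ∀ lam : I, 0 < (S lam i0).re)
    (t : ℂ) (ht : ‖t‖ = 1)
    (h : I → ℝ) (h0 : h i0 = 0)
    (hT : T = Matrix.diagonal (fun lam : I =>
      t * Complex.exp (2 * (π : ℂ) * Complex.I * (h lam : ℂ))))
    (hmod : (S * T) ^ 3 = S ^ 2)
    (d : I → ℂ) (hd : ∀ rho : I, d rho = S rho i0 / S i0 i0)
    (N : I → I → I → ℂ)
    (hN : ∀ lam mu rho : I,
      N lam mu rho = ∑ sigma : I, S lam sigma * S mu sigma * conj (S rho sigma) / S i0 sigma) :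
    ∀ lam mu : I, S lam mu = S i0 i0 *
      ∑ rho : I, Complex.exp (2 * (π : ℂ) * Complex.I * ((h lam : ℂ) + (h mu : ℂ) - (h rho : ℂ))) *
        N lam mu rho * d rho := by
  intro lam mu
  set w : I → ℂ := fun ρ => t * Complex.exp (2 * (π : ℂ) * Complex.I * (h ρ : ℂ)) with hw_def
  have hw : ∀ ρ, ‖w ρ‖ = 1 := fun ρ => by
    rw [norm_mul, ht, one_mul, ← Complex.norm_exp_ofReal_mul_I (2 * π * h ρ)]
    push_cast
    ring_nf
  have ht0 : t ≠ 0 := norm_ne_zero_iff.mp (by simp [ht])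
  have hphase : ∀ ρ, Complex.exp (2 * (π : ℂ) * Complex.I * ((h lam : ℂ) + (h mu : ℂ) - (h ρ : ℂ)))
      = w lam * w mu / (w i0 * w ρ) := fun ρ => by
    rw [mul_sub, mul_add, Complex.exp_sub, Complex.exp_add]
    simp only [hw_def, h0, Complex.ofReal_zero, mul_zero, Complex.exp_zero]
    field_simp
  subst hT
  simp only [hd, hN, hphase]
  exact Matrix.apply_eq_mul_sum_verlinde_of_mul_diagonal_pow_three_eq_sq i0 hS hsymm
    (fun ρ => Complex.conj_eq_iff_im.mpr (hreal ρ)) (fun ρ hz => (hpos ρ).ne' (by simp [hz]))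
    hw hmod lam mu
end

section
/- Let ℓ ≥ 1 and let A be the ℓ×ℓ real matrix given by A_{i,i+1} = A_{i+1,i} = 1 for 1 ≤ i ≤ ℓ−1, A_{ℓ,ℓ} = 1, and all other entries 0 (the adjacency matrix of the tadpole graph T_ℓ). Then for every odd integer m with 1 ≤ m ≤ 2ℓ−1, the vector v^(m) with components v^(m)_j = sin(j m π/(2ℓ+1)), j = 1, …, ℓ, is a nonzero eigenvector of A with eigenvalue 2 cos(m π/(2ℓ+1)). -/
open scoped Real

/-- For the adjacency matrix `A` of the tadpole graph `T_ℓ` (vertices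
`1, …, ℓ`, here indexed by `Fin ℓ` with vertex `j` corresponding to index `j-1`), for
every odd `m` with `1 ≤ m ≤ 2ℓ−1`, the vector `v j = sin(j·m·π/(2ℓ+1))` is a nonzero
eigenvector with eigenvalue `2 cos(m·π/(2ℓ+1))`. -/
theorem tadpole_eigenvector
    (ℓ : ℕ) (hℓ : 1 ≤ ℓ)
    (A : Matrix (Fin ℓ) (Fin ℓ) ℝ)
    (hA : ∀ i j : Fin ℓ, A i j =
      if ((i : ℕ) + 1 = (j : ℕ) ∨ (j : ℕ) + 1 = (i : ℕ) ∨
          ((i : ℕ) = ℓ - 1 ∧ (j : ℕ) = ℓ - 1)) then 1 else 0)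
    (m : ℕ) (hm : Odd m) (hm1 : 1 ≤ m) (hm2 : m ≤ 2 * ℓ - 1)
    (v : Fin ℓ → ℝ)
    (hv : ∀ j : Fin ℓ, v j = Real.sin (((j : ℕ) + 1) * m * π / (2 * ℓ + 1))) :
    v ≠ 0 ∧ A.mulVec v = (2 * Real.cos (m * π / (2 * ℓ + 1))) • v := by
  have hπ := Real.pi_pos
  have hden : ((2:ℝ) * ℓ + 1) ≠ 0 := by positivity
  set c : ℝ := 2 * Real.cos (m * π / (2 * ℓ + 1)) with hc
  set w : ℕ → ℝ := fun k => Real.sin (((k : ℕ) + 1) * m * π / (2 * ℓ + 1)) with hwdef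
  have hvw : ∀ j : Fin ℓ, v j = w (j : ℕ) := fun j => hv j
  -- recurrence
  have hrec : ∀ k : ℕ, w k + w (k + 2) = c * w (k + 1) := by
    intro k
    simp only [hwdef]
    push_cast
    rw [show ((k:ℝ) + 1) * m * π / (2 * ℓ + 1)
        = ((k:ℝ) + 1 + 1) * m * π / (2 * ℓ + 1) - m * π / (2 * ℓ + 1) by ring,
      show ((k:ℝ) + 2 + 1) * m * π / (2 * ℓ + 1)
        = ((k:ℝ) + 1 + 1) * m * π / (2 * ℓ + 1) + m * π / (2 * ℓ + 1) by ring,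
      Real.sin_sub, Real.sin_add, hc]
    ring
  -- base case
  have hbase : w 1 = c * w 0 := by
    simp only [hwdef]
    push_cast
    rw [show ((1:ℝ) + 1) * m * π / (2 * ℓ + 1)
        = 2 * ((m : ℝ) * π / (2 * ℓ + 1)) by ring,
      show ((0:ℝ) + 1) * m * π / (2 * ℓ + 1) = (m : ℝ) * π / (2 * ℓ + 1) by ring,
      Real.sin_two_mul, hc]
    ring
  -- boundary identity
  have hbd : w ℓ = w (ℓ - 1) := by
    obtain ⟨k, hk⟩ := hm
    simp only [hwdef]
    have hcast : ((ℓ - 1 : ℕ) : ℝ) = (ℓ : ℝ) - 1 := by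
      push_cast [hℓ]; ring
    rw [hcast,
      show ((ℓ:ℝ) + 1) * m * π / (2 * ℓ + 1)
        = (π - ((ℓ:ℝ) - 1 + 1) * m * π / (2 * ℓ + 1)) + (k : ℤ) * (2 * π) by
          field_simp
          push_cast [hk]
          ring,
      Real.sin_add_int_mul_two_pi, Real.sin_pi_sub]
  constructor
  · -- nonzero
    intro h0
    have h1 : v ⟨0, hℓ⟩ = 0 := by rw [h0]; rfl
    rw [hv] at h1
    have hpos : (0:ℝ) < (((0:ℕ):ℝ) + 1) * m * π / (2 * ℓ + 1) := by
      have : (0:ℝ) < (m:ℝ) := by exact_mod_cast hm1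
      positivity
    have hlt : (((0:ℕ):ℝ) + 1) * m * π / (2 * ℓ + 1) < π := by
      rw [div_lt_iff₀ (by positivity)]
      have : (m:ℝ) < 2 * ℓ + 1 := by
        have : m < 2 * ℓ + 1 := by omega
        exact_mod_cast this
      push_cast
      nlinarith
    have := Real.sin_pos_of_pos_of_lt_pi (x := (((0:ℕ):ℝ) + 1) * m * π / (2 * ℓ + 1)) hpos hlt
    simp only [Fin.val_mk] at h1
    linarith [this, h1.ge, h1.le]
  · funext i
    have hmv : A.mulVec v i = ∑ j, A i j * v j := by
      simp [Matrix.mulVec, dotProduct]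
    rw [hmv]
    show ∑ j, A i j * v j = (c • v) i
    rw [Pi.smul_apply, smul_eq_mul, hvw i]
    rcases eq_or_lt_of_le hℓ with hl1 | hl2
    · -- ℓ = 1
      obtain rfl : ℓ = 1 := hl1.symm
      rw [Fin.sum_univ_one]
      have hi : i = 0 := Subsingleton.elim _ _
      subst hi
      have hA00 : A 0 0 = 1 := by rw [hA, if_pos]; right; right; exact ⟨by simp, by simp⟩
      rw [hA00, hvw, one_mul]
      have hthis : w 1 = w 0 := by simpa using hbd
      simp only [Fin.val_zero]
      exact hthis.symm.trans hbase
    · -- ℓ ≥ 2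
      have hl2' : 2 ≤ ℓ := hl2
      rcases Nat.eq_zero_or_pos (i : ℕ) with hi0 | hipos
      · -- first row
        have hsum : ∑ j, A i j * v j = A i ⟨1, hl2⟩ * v ⟨1, hl2⟩ := by
          apply Finset.sum_eq_single
          · intro b _ hb
            rw [hA, if_neg, zero_mul]
            have hb' : (b : ℕ) ≠ 1 := by
              intro h; exact hb (Fin.ext h)
            push_neg
            refine ⟨by omega, by omega, by omega⟩
          · intro h; exact absurd (Finset.mem_univ _) h
        rw [hsum, hA, if_pos (by simp [hi0]), hvw, one_mul]
        simp only [Fin.val_mk, hi0]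
        rw [hbase]
      · rcases Nat.lt_or_ge (i : ℕ) (ℓ - 1) with hint | hlast
        · -- interior row
          set p : Fin ℓ := ⟨(i:ℕ) - 1, by omega⟩ with hp
          set q : Fin ℓ := ⟨(i:ℕ) + 1, by omega⟩ with hq
          have hpq : p ≠ q := by
            simp only [hp, hq, Ne, Fin.mk.injEq]
            omega
          have hsub : ∑ j, A i j * v j = ∑ j ∈ ({p, q} : Finset (Fin ℓ)), A i j * v j := by
            symm
            apply Finset.sum_subset (Finset.subset_univ _)
            intro j _ hj
            simp only [Finset.mem_insert, Finset.mem_singleton] at hj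
            push_neg at hj
            obtain ⟨hj1, hj2⟩ := hj
            have h1 : (j : ℕ) ≠ (i:ℕ) - 1 := fun h => hj1 (Fin.ext h)
            have h2 : (j : ℕ) ≠ (i:ℕ) + 1 := fun h => hj2 (Fin.ext h)
            rw [hA, if_neg, zero_mul]
            push_neg
            refine ⟨by omega, by omega, by omega⟩
          rw [hsub, Finset.sum_pair hpq, hA i p, hA i q,
            if_pos (by right; left; simp [hp]; omega),
            if_pos (by left; simp [hq]), hvw, hvw, one_mul, one_mul]
          simp only [hp, hq, Fin.val_mk]
          have := hrec ((i:ℕ) - 1)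
          rw [show (i:ℕ) - 1 + 2 = (i:ℕ) + 1 by omega, show (i:ℕ) - 1 + 1 = (i:ℕ) by omega] at this
          linarith [this]
        · -- last row
          have hil : (i : ℕ) = ℓ - 1 := by omega
          set p : Fin ℓ := ⟨ℓ - 2, by omega⟩ with hp
          have hpi : p ≠ i := by
            intro h
            have : (p : ℕ) = (i : ℕ) := by rw [h]
            simp [hp, hil] at this
            omega
          have hsub : ∑ j, A i j * v j = ∑ j ∈ ({p, i} : Finset (Fin ℓ)), A i j * v j := by
            symm
            apply Finset.sum_subset (Finset.subset_univ _)
            intro j _ hj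
            simp only [Finset.mem_insert, Finset.mem_singleton] at hj
            push_neg at hj
            obtain ⟨hj1, hj2⟩ := hj
            have h1 : (j : ℕ) ≠ ℓ - 2 := fun h => hj1 (Fin.ext h)
            have h2 : (j : ℕ) ≠ (i : ℕ) := fun h => hj2 (Fin.ext h)
            rw [hA, if_neg, zero_mul]
            push_neg
            refine ⟨by omega, by omega, by omega⟩
          rw [hsub, Finset.sum_pair hpi, hA i p, hA i i,
            if_pos (by right; left; simp [hp]; omega),
            if_pos (by right; right; exact ⟨hil, hil⟩), hvw, hvw, one_mul, one_mul]
          simp only [hp, Fin.val_mk, hil]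
          have := hrec (ℓ - 2)
          rw [show ℓ - 2 + 2 = ℓ by omega, show ℓ - 2 + 1 = ℓ - 1 by omega] at this
          linarith [this, hbd]
end

section
/- Let ℓ ≥ 1 and let A be the ℓ×ℓ real matrix given by A_{i,i+1} = A_{i+1,i} = 1 for 1 ≤ i ≤ ℓ−1, A_{ℓ,ℓ} = 1, and all other entries 0 (the adjacency matrix of the tadpole graph T_ℓ). Then the eigenvalues of A are exactly the ℓ distinct real numbers 2 cos(m π/(2ℓ+1)) for odd m with 1 ≤ m ≤ 2ℓ−1; in particular all eigenvalues of A are simple. -/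
/-!
For `μ = 2 cos θ` the vector `(sin ((k + 1) θ))ₖ` satisfies every row of `A v = μ v` except the
one of the loop, and that row is the boundary condition `sin ((ℓ + 1) θ) = sin (ℓ θ)`, which
holds for `θ = m π / (2ℓ + 1)` with `m` odd. This gives `ℓ` distinct eigenvalues of an `ℓ × ℓ`
matrix, so there are no others. An eigenvector is determined by its first entry through the
three-term recurrence along the path, so every eigenspace is at most a line.
-/

open Real Module Module.End Matrix

theorem Module.End.mem_of_hasEigenvalue_of_finrank_le_card {K V : Type*} [Field K]
    [AddCommGroup V] [Module K V] [FiniteDimensional K V] {f : End K V} {s : Finset K}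
    (hs : ∀ μ ∈ s, f.HasEigenvalue μ) (hcard : finrank K V ≤ s.card) {μ : K}
    (hμ : f.HasEigenvalue μ) : μ ∈ s := by
  classical
  by_contra hμs
  have hall : ∀ ν : (insert μ s : Finset K), f.HasEigenvalue ν := fun ν =>
    (Finset.mem_insert.mp ν.2).elim (fun h => by rwa [h]) (hs _)
  choose x hx using fun ν => (hall ν).exists_hasEigenvector
  have := (f.eigenvectors_linearIndependent' _ Subtype.coe_injective x hx).fintype_card_le_finrank
  rw [Fintype.card_coe, Finset.card_insert_of_notMem hμs] at this
  omega

theorem Matrix.hasEigenvalue_toLin'_iff {n K : Type*} [Fintype n] [DecidableEq n] [Field K]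
    (A : Matrix n n K) (μ : K) :
    HasEigenvalue (toLin' A) μ ↔ ∃ v ≠ 0, A *ᵥ v = μ • v := by
  simp [hasEigenvalue_iff, Submodule.ne_bot_iff, and_comm]

theorem Real.injOn_cos_nat_mul_pi_div {N : ℝ} (hN : 0 < N) :
    Set.InjOn (fun m : ℕ => cos (m * π / N)) {m | (m : ℝ) ≤ N} := by
  intro a ha b hb hab
  have mem : ∀ m : ℕ, (m : ℝ) ≤ N → m * π / N ∈ Set.Icc 0 π := fun m hm =>
    ⟨by positivity, div_le_of_le_mul₀ hN.le pi_pos.le (by nlinarith [pi_pos])⟩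
  have := injOn_cos (mem a ha) (mem b hb) hab
  field_simp at this
  exact_mod_cast this

theorem Real.sin_succ_mul_eq_sin_mul_of_odd {ℓ m : ℕ} (hm : Odd m) :
    sin ((ℓ + 1) * (m * π / (2 * ℓ + 1))) = sin (ℓ * (m * π / (2 * ℓ + 1))) := by
  have : ((ℓ : ℝ) + 1) * (m * π / (2 * ℓ + 1)) = m * π - ℓ * (m * π / (2 * ℓ + 1)) := by
    field_simp; ring
  rw [this, sin_nat_mul_pi_sub, hm.neg_one_pow]
  ring

def tadpole (ℓ : ℕ) : Matrix (Fin ℓ) (Fin ℓ) ℝ :=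
  Matrix.of fun i j => if ((i : ℕ) + 1 = (j : ℕ) ∨ (j : ℕ) + 1 = (i : ℕ) ∨
    ((i : ℕ) = ℓ - 1 ∧ (j : ℕ) = ℓ - 1)) then 1 else 0

namespace tadpole

variable {ℓ : ℕ}

/-- The loop makes the last vertex its own right neighbour. -/
theorem mulVec_apply (w : ℕ → ℝ) (i : Fin ℓ) :
    (tadpole ℓ *ᵥ fun j => w j) i =
      (if (i : ℕ) = 0 then 0 else w (i - 1)) + w (min (i + 1) (ℓ - 1)) := by
  obtain ⟨n, hn⟩ := i
  have indicator : ∀ j < ℓ,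
      (if (n + 1 = j ∨ j + 1 = n ∨ (n = ℓ - 1 ∧ j = ℓ - 1)) then (1 : ℝ) else 0) * w j =
        (if j = n - 1 then (if n = 0 then 0 else w j) else 0) +
          (if j = min (n + 1) (ℓ - 1) then w j else 0) := by
    intro j hj
    split_ifs <;> first | omega | simp
  simp only [mulVec, dotProduct, tadpole, of_apply]
  rw [Fin.sum_univ_eq_sum_range
      (fun j => (if (n + 1 = j ∨ j + 1 = n ∨ (n = ℓ - 1 ∧ j = ℓ - 1)) then (1 : ℝ) else 0) * w j),
    Finset.sum_congr rfl fun j hj => indicator j (Finset.mem_range.mp hj), Finset.sum_add_distrib,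
    Finset.sum_ite_eq', Finset.sum_ite_eq']
  simp only [Finset.mem_range]
  split_ifs <;> first | omega | simp_all

theorem mulVec_sin {θ : ℝ} (hθ : sin ((ℓ + 1) * θ) = sin (ℓ * θ)) :
    tadpole ℓ *ᵥ (fun j : Fin ℓ => sin ((j + 1) * θ)) =
      (2 * cos θ) • fun j : Fin ℓ => sin ((j + 1) * θ) := by
  funext ⟨i, hi⟩
  have row := mulVec_apply (fun k : ℕ => sin ((k + 1) * θ)) ⟨i, hi⟩
  have prev : (if i = 0 then 0 else sin (((i - 1 : ℕ) + 1) * θ)) = sin ((i + 1) * θ - θ) := by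
    split_ifs with h
    · simp [h]
    · rw [Nat.cast_sub (by omega)]
      ring_nf
  have next : sin (((min (i + 1) (ℓ - 1) : ℕ) + 1) * θ) = sin ((i + 1) * θ + θ) := by
    rcases lt_or_eq_of_le (Nat.succ_le_of_lt hi) with h | h
    · rw [min_eq_left (by omega)]
      push_cast
      ring_nf
    · subst h
      rw [min_eq_right (by omega), Nat.succ_sub_one]
      push_cast at hθ ⊢
      rw [← add_one_mul, hθ]
  simp only [prev, next] at row
  rw [row, Pi.smul_apply, smul_eq_mul, ← two_mul_sin_mul_cos]
  ring

theorem hasEigenvalue_two_mul_cos (hℓ : 0 < ℓ) {θ : ℝ} (hθ : sin ((ℓ + 1) * θ) = sin (ℓ * θ))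
    (hsin : sin θ ≠ 0) : HasEigenvalue (toLin' (tadpole ℓ)) (2 * cos θ) := by
  rw [hasEigenvalue_toLin'_iff]
  refine ⟨_, fun h => hsin ?_, mulVec_sin hθ⟩
  simpa using congrFun h ⟨0, hℓ⟩

noncomputable def eigenvalue (ℓ m : ℕ) : ℝ := 2 * cos (m * π / (2 * ℓ + 1))

theorem hasEigenvalue_eigenvalue {m : ℕ} (hm : Odd m) (hmℓ : m < 2 * ℓ + 1) :
    HasEigenvalue (toLin' (tadpole ℓ)) (eigenvalue ℓ m) := by
  have hm₀ : (1 : ℝ) ≤ m := by exact_mod_cast hm.pos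
  have hmℓ' : (m : ℝ) < 2 * ℓ + 1 := by exact_mod_cast hmℓ
  refine hasEigenvalue_two_mul_cos (by have := hm.pos; omega) (sin_succ_mul_eq_sin_mul_of_odd hm)
    (sin_pos_of_pos_of_lt_pi (by positivity) ?_).ne'
  exact (div_lt_iff₀ (by positivity)).mpr (by nlinarith [pi_pos])

theorem injOn_eigenvalue (ℓ : ℕ) : Set.InjOn (eigenvalue ℓ) {m | m ≤ 2 * ℓ + 1} :=
  fun a ha b hb hab => injOn_cos_nat_mul_pi_div (by positivity) (by exact_mod_cast ha)
    (by exact_mod_cast hb) (mul_left_cancel₀ two_ne_zero hab)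

theorem eq_zero_of_mulVec_eq_smul {μ : ℝ} {w : ℕ → ℝ}
    (hw : tadpole ℓ *ᵥ (fun j : Fin ℓ => w j) = μ • fun j : Fin ℓ => w j) (h0 : w 0 = 0) :
    ∀ k < ℓ, w k = 0 := by
  have row (k : ℕ) (hk : k < ℓ) :
      (if k = 0 then 0 else w (k - 1)) + w (min (k + 1) (ℓ - 1)) = μ * w k :=
    (mulVec_apply w ⟨k, hk⟩).symm.trans (congrFun hw ⟨k, hk⟩)
  intro k
  induction k using Nat.twoStepInduction with
  | zero => exact fun _ => h0
  | one =>
    intro h1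
    simpa [h0, min_eq_left (show 1 ≤ ℓ - 1 by omega)] using row 0 (by omega)
  | more k ih0 ih1 =>
    intro hk
    have := row (k + 1) (by omega)
    rwa [if_neg k.succ_ne_zero, Nat.add_sub_cancel, min_eq_left (by omega), ih0 (by omega),
      ih1 (by omega), mul_zero, zero_add] at this

theorem finrank_eigenspace_le_one (μ : ℝ) :
    finrank ℝ (eigenspace (toLin' (tadpole ℓ)) μ) ≤ 1 := by
  rcases Nat.eq_zero_or_pos ℓ with rfl | hℓ
  · exact (Submodule.finrank_le _).trans (by simp)
  let head : eigenspace (toLin' (tadpole ℓ)) μ →ₗ[ℝ] ℝ :=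
    (LinearMap.proj ⟨0, hℓ⟩).comp (Submodule.subtype _)
  suffices Function.Injective head by simpa using LinearMap.finrank_le_finrank_of_injective this
  rw [← LinearMap.ker_eq_bot, LinearMap.ker_eq_bot']
  rintro ⟨v, hv⟩ (hv0 : v ⟨0, hℓ⟩ = 0)
  let w : ℕ → ℝ := fun k => if h : k < ℓ then v ⟨k, h⟩ else 0
  have hvw : v = fun j : Fin ℓ => w j := by simp [w]
  rw [mem_eigenspace_iff, toLin'_apply, hvw] at hv
  have := eq_zero_of_mulVec_eq_smul hv (by simpa [w, hℓ] using hv0)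
  ext j
  exact (congrFun hvw j).trans (this j j.2)

/-- An `ℓ × ℓ` matrix has at most `ℓ` eigenvalues, and the `eigenvalue ℓ m` for odd `m < 2ℓ`
are already `ℓ` of them. -/
theorem hasEigenvalue_iff {μ : ℝ} :
    HasEigenvalue (toLin' (tadpole ℓ)) μ ↔ ∃ m, Odd m ∧ m < 2 * ℓ ∧ μ = eigenvalue ℓ m := by
  refine ⟨fun hμ => ?_, fun ⟨m, hm, hmℓ, hμ⟩ => hμ ▸ hasEigenvalue_eigenvalue hm (by omega)⟩
  let s := (Finset.range ℓ).image fun j => eigenvalue ℓ (2 * j + 1)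
  have hcard : s.card = ℓ := by
    rw [Finset.card_image_of_injOn, Finset.card_range]
    intro a ha b hb hab
    have := injOn_eigenvalue ℓ (by simp at ha; omega : 2 * a + 1 ≤ 2 * ℓ + 1)
      (by simp at hb; omega : 2 * b + 1 ≤ 2 * ℓ + 1) hab
    omega
  have hs : ∀ ν ∈ s, HasEigenvalue (toLin' (tadpole ℓ)) ν := by
    simpa [s] using fun j hj => hasEigenvalue_eigenvalue (odd_two_mul_add_one j) (by omega)
  obtain ⟨j, hj, rfl⟩ := Finset.mem_image.mp
    (mem_of_hasEigenvalue_of_finrank_le_card hs (by simp [hcard]) hμ)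
  exact ⟨2 * j + 1, odd_two_mul_add_one j, by simp at hj; omega, rfl⟩

end tadpole

theorem tadpole_eigenvalues_general
    (ℓ : ℕ)
    (A : Matrix (Fin ℓ) (Fin ℓ) ℝ)
    (hA : ∀ i j : Fin ℓ, A i j =
      if ((i : ℕ) + 1 = (j : ℕ) ∨ (j : ℕ) + 1 = (i : ℕ) ∨
          ((i : ℕ) = ℓ - 1 ∧ (j : ℕ) = ℓ - 1)) then 1 else 0) :
    (∀ μ : ℝ, (∃ v : Fin ℓ → ℝ, v ≠ 0 ∧ A.mulVec v = μ • v) ↔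
      ∃ m : ℕ, Odd m ∧ 1 ≤ m ∧ m ≤ 2 * ℓ - 1 ∧ μ = 2 * Real.cos (m * π / (2 * ℓ + 1))) ∧
    (Set.InjOn (fun m : ℕ => 2 * Real.cos (m * π / (2 * ℓ + 1)))
      {m : ℕ | Odd m ∧ 1 ≤ m ∧ m ≤ 2 * ℓ - 1}) ∧
    (∀ μ : ℝ, Module.finrank ℝ
      (Module.End.eigenspace (Matrix.toLin' A) μ) ≤ 1) := by
  obtain rfl : A = tadpole ℓ := Matrix.ext hA
  refine ⟨fun μ => ?_, (tadpole.injOn_eigenvalue ℓ).mono fun m ⟨_, _, hm⟩ =>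
    show m ≤ 2 * ℓ + 1 by omega,
    tadpole.finrank_eigenspace_le_one⟩
  rw [← hasEigenvalue_toLin'_iff, tadpole.hasEigenvalue_iff]
  refine exists_congr fun m => ⟨fun ⟨hm, hmℓ, hμ⟩ => ⟨hm, hm.pos, by omega, hμ⟩, ?_⟩
  exact fun ⟨hm, _, hmℓ, hμ⟩ => ⟨hm, by omega, hμ⟩

/-- The eigenvalues of the adjacency matrix of the tadpole graph `T_ℓ` are
exactly the `ℓ` distinct numbers `2 cos(m·π/(2ℓ+1))` for odd `m`, `1 ≤ m ≤ 2ℓ−1`; all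
eigenvalues are simple (eigenspaces have dimension at most one). -/
theorem tadpole_eigenvalues
    (ℓ : ℕ) (hℓ : 1 ≤ ℓ)
    (A : Matrix (Fin ℓ) (Fin ℓ) ℝ)
    (hA : ∀ i j : Fin ℓ, A i j =
      if ((i : ℕ) + 1 = (j : ℕ) ∨ (j : ℕ) + 1 = (i : ℕ) ∨
          ((i : ℕ) = ℓ - 1 ∧ (j : ℕ) = ℓ - 1)) then 1 else 0) :
    (∀ μ : ℝ, (∃ v : Fin ℓ → ℝ, v ≠ 0 ∧ A.mulVec v = μ • v) ↔
      ∃ m : ℕ, Odd m ∧ 1 ≤ m ∧ m ≤ 2 * ℓ - 1 ∧ μ = 2 * Real.cos (m * π / (2 * ℓ + 1))) ∧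
    (Set.InjOn (fun m : ℕ => 2 * Real.cos (m * π / (2 * ℓ + 1)))
      {m : ℕ | Odd m ∧ 1 ≤ m ∧ m ≤ 2 * ℓ - 1}) ∧
    (∀ μ : ℝ, Module.finrank ℝ
      (Module.End.eigenspace (Matrix.toLin' A) μ) ≤ 1) :=
  tadpole_eigenvalues_general ℓ A hA
end

section
/- Let n ≥ 2 be an integer, set ñ = n/2 if n is even and ñ = n if n is odd, let δ be a positive divisor of ñ, set α = gcd(δ, ñ/δ), and choose integers r, s with r·(ñ/(δα)) − s·(δ/α) = 1; put ω = r·(ñ/(δα)) + s·(δ/α). Define a matrix Z^(δ) indexed by ℤ/nℤ by Z^(δ)_{j,j'} = 1 if α divides j, α divides j', and j' ≡ ω·j (mod n/α), and Z^(δ)_{j,j'} = 0 otherwise. Then for every j ∈ ℤ/nℤ: Z^(δ)_{j,j} = 1 if and only if (ñ/δ) divides j. -/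
/-- For the modular invariant `Z^(δ)` of the `ℤ_n` conformal field theory
(indexed by `ZMod n`), the diagonal entry `Z^(δ)_{j,j}` equals `1` iff `ñ/δ ∣ j`. -/
theorem Zn_modular_invariant_diagonal
    (n nt δ a : ℕ) (r s ω : ℤ)
    (hn : 2 ≤ n)
    (hnt : nt = if Even n then n / 2 else n)
    (hδ : δ ∣ nt) (hδpos : 0 < δ)
    (ha : a = Nat.gcd δ (nt / δ))
    (hrs : r * ((nt / (δ * a) : ℕ) : ℤ) - s * ((δ / a : ℕ) : ℤ) = 1)
    (hω : ω = r * ((nt / (δ * a) : ℕ) : ℤ) + s * ((δ / a : ℕ) : ℤ))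
    (Z : ZMod n → ZMod n → ℕ)
    (hZ : ∀ j j' : ZMod n, Z j j' =
      if a ∣ j.val ∧ a ∣ j'.val ∧
          ((n / a : ℕ) : ℤ) ∣ ((j'.val : ℤ) - ω * (j.val : ℤ)) then 1 else 0) :
    ∀ j : ZMod n, Z j j = 1 ↔ (nt / δ) ∣ j.val := by
  intro j
  set b := δ / a with hb
  set c := nt / (δ * a) with hc
  have hntpos : 0 < nt := by
    rw [hnt]; split_ifs with h
    · exact Nat.div_pos hn (by norm_num)
    · omega
  have haδ : a ∣ δ := ha ▸ Nat.gcd_dvd_left _ _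
  have haq : a ∣ nt / δ := ha ▸ Nat.gcd_dvd_right _ _
  have hapos : 0 < a := by rw [ha]; exact Nat.gcd_pos_of_pos_left _ hδpos
  have hab : a * b = δ := Nat.mul_div_cancel' haδ
  have hac : a * c = nt / δ := by
    rw [hc, ← Nat.div_div_eq_div_mul]; exact Nat.mul_div_cancel' haq
  have hntδ : δ * (a * c) = nt := by rw [hac]; exact Nat.mul_div_cancel' hδ
  have hbpos : 0 < b := by
    rcases Nat.eq_zero_or_pos b with h0 | h
    · rw [h0, Nat.mul_zero] at hab; omega
    · exact h
  have hacdvd : a * c ∣ nt := Dvd.intro_left δ hntδ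
  have hnta : nt = a * (b * (a * c)) := by rw [← hntδ, ← hab]; ring
  have hadvdnt : a ∣ nt := ⟨_, hnta⟩
  have hω' : ω = 1 + 2 * s * (b : ℤ) := by rw [hω]; linarith [hrs]
  have hne : n = (if Even n then 2 else 1) * nt := by
    rw [hnt]; split_ifs with h
    · obtain ⟨k, hk⟩ := h; omega
    · omega
  have hna : n / a = (if Even n then 2 else 1) * (b * (a * c)) := by
    conv_lhs => rw [hne, Nat.mul_div_assoc _ hadvdnt]
    rw [hnta, Nat.mul_div_cancel_left _ hapos]
  have hbne : (b : ℤ) ≠ 0 := Int.natCast_ne_zero.mpr hbpos.ne'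
  have hane : (a : ℤ) ≠ 0 := Int.natCast_ne_zero.mpr hapos.ne'
  have hco : IsCoprime s ((c : ℕ) : ℤ) := ⟨-(b : ℤ), r, by linear_combination hrs⟩
  -- core cancellation lemma
  have hmain : ∀ J : ℤ, ((a : ℤ) ∣ J ∧ ((a * c : ℕ) : ℤ) ∣ s * J) ↔ ((a * c : ℕ) : ℤ) ∣ J := by
    intro J
    push_cast
    constructor
    · rintro ⟨⟨m, rfl⟩, hd⟩
      have h1 : (c : ℤ) ∣ s * m := by
        rw [show s * ((a : ℤ) * m) = (a : ℤ) * (s * m) by ring] at hd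
        exact (mul_dvd_mul_iff_left hane).mp hd
      have h2 : (c : ℤ) ∣ m := hco.symm.dvd_of_dvd_mul_left h1
      exact mul_dvd_mul_left _ h2
    · intro h
      exact ⟨dvd_trans (dvd_mul_right _ _) h, h.mul_left s⟩
  -- the n/a divisibility condition
  have hdvd_iff : ∀ J : ℤ, (((n / a : ℕ) : ℤ) ∣ (J - ω * J)) ↔ ((a * c : ℕ) : ℤ) ∣ s * J := by
    intro J
    have h1 : J - ω * J = -(2 * s * (b : ℤ) * J) := by rw [hω']; ring
    rw [h1, dvd_neg, hna]
    by_cases hev : Even n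
    · rw [if_pos hev]
      push_cast
      rw [show ((2 : ℤ) * ((b : ℤ) * ((a : ℤ) * c))) = (2 * b) * ((a : ℤ) * c) by ring,
          show (2 : ℤ) * s * b * J = (2 * b) * (s * J) by ring]
      exact mul_dvd_mul_iff_left (mul_ne_zero two_ne_zero hbne)
    · rw [if_neg hev]
      push_cast
      rw [show ((1 : ℤ) * ((b : ℤ) * ((a : ℤ) * c))) = (b : ℤ) * ((a : ℤ) * c) by ring,
          show (2 : ℤ) * s * b * J = (b : ℤ) * (2 * (s * J)) by ring,
          mul_dvd_mul_iff_left hbne]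
      have hodd : ¬ (2 ∣ a * c) := by
        intro hd
        apply hev
        rw [even_iff_two_dvd]
        have hnn : nt = n := by rw [hnt, if_neg hev]
        exact hd.trans (hnn ▸ hacdvd)
      have hcop : IsCoprime ((a * c : ℕ) : ℤ) (2 : ℤ) := by
        have : Nat.Coprime (a * c) 2 := (Nat.coprime_comm.mp
          ((Nat.prime_two.coprime_iff_not_dvd).mpr hodd))
        exact_mod_cast Nat.isCoprime_iff_coprime.mpr this
      constructor
      · intro h
        have := hcop.dvd_of_dvd_mul_left (by push_cast at h ⊢; exact h)
        push_cast at this ⊢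
        exact this
      · intro h
        exact h.mul_left 2
  -- assemble
  have hiff : (a ∣ j.val ∧ a ∣ j.val ∧
      ((n / a : ℕ) : ℤ) ∣ ((j.val : ℤ) - ω * (j.val : ℤ))) ↔ (nt / δ) ∣ j.val := by
    rw [← hac]
    constructor
    · rintro ⟨h1, -, h3⟩
      have := (hmain (j.val : ℤ)).mp ⟨Int.natCast_dvd_natCast.mpr h1, (hdvd_iff _).mp h3⟩
      exact_mod_cast this
    · intro h
      have h' : ((a * c : ℕ) : ℤ) ∣ (j.val : ℤ) := Int.natCast_dvd_natCast.mpr h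
      have h2 := (hmain (j.val : ℤ)).mpr h'
      have h1 : a ∣ j.val := by exact_mod_cast h2.1
      exact ⟨h1, h1, (hdvd_iff _).mpr h2.2⟩
  rw [hZ]
  split_ifs with h
  · exact iff_of_true rfl (hiff.mp h)
  · exact iff_of_false (by norm_num) (fun hh => h (hiff.mpr hh))
end

section
/- Let n ≥ 2 be an integer, set ñ = n/2 if n is even and ñ = n if n is odd, let δ be a positive divisor of ñ, set α = gcd(δ, ñ/δ), choose integers r, s with r·(ñ/(δα)) − s·(δ/α) = 1, put ω = r·(ñ/(δα)) + s·(δ/α), and define Z^(δ) indexed by ℤ/nℤ by Z^(δ)_{j,j'} = 1 if α ∣ j, α ∣ j' and j' ≡ ω·j (mod n/α), and 0 otherwise. Then the trace of Z^(δ) equals ε·δ, where ε = 2 if n is even and ε = 1 if n is odd; that is, Σ_{j∈ℤ/nℤ} Z^(δ)_{j,j} = εδ. -/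
/-- The trace of the modular invariant `Z^(δ)` of the `ℤ_n` conformal
field theory equals `ε·δ`, where `ε = 2` if `n` is even and `ε = 1` if `n` is odd. -/
theorem Zn_modular_invariant_trace
    (n nt δ a ε : ℕ) (r s ω : ℤ) [NeZero n]
    (hn : 2 ≤ n)
    (hnt : nt = if Even n then n / 2 else n)
    (hε : ε = if Even n then 2 else 1)
    (hδ : δ ∣ nt) (hδpos : 0 < δ)
    (ha : a = Nat.gcd δ (nt / δ))
    (hrs : r * ((nt / (δ * a) : ℕ) : ℤ) - s * ((δ / a : ℕ) : ℤ) = 1)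
    (hω : ω = r * ((nt / (δ * a) : ℕ) : ℤ) + s * ((δ / a : ℕ) : ℤ))
    (Z : ZMod n → ZMod n → ℕ)
    (hZ : ∀ j j' : ZMod n, Z j j' =
      if a ∣ j.val ∧ a ∣ j'.val ∧
          ((n / a : ℕ) : ℤ) ∣ ((j'.val : ℤ) - ω * (j.val : ℤ)) then 1 else 0) :
    ∑ j : ZMod n, Z j j = ε * δ := by
  set δ' := δ / a with hδ'
  set q := nt / (δ * a) with hq
  have hadvdδ : a ∣ δ := ha ▸ Nat.gcd_dvd_left _ _
  have hapos : 0 < a := by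
    rw [ha]; exact Nat.gcd_pos_of_pos_left _ hδpos
  have hntpos : 0 < nt := by
    rcases Nat.even_or_odd n with he | ho
    · rw [hnt, if_pos he]; omega
    · rw [hnt, if_neg (Nat.not_even_iff_odd.mpr ho)]; omega
  have hδa_dvd : δ * a ∣ nt := by
    have h1 : a ∣ nt / δ := ha ▸ Nat.gcd_dvd_right _ _
    rcases h1 with ⟨c, hc⟩
    exact ⟨c, by rw [mul_assoc, ← hc, Nat.mul_div_cancel' hδ]⟩
  have hδeq : a * δ' = δ := Nat.mul_div_cancel' hadvdδ
  have hnt_eq : nt = δ * a * q := (Nat.mul_div_cancel' hδa_dvd).symm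
  have hn_eq : n = ε * nt := by
    rcases Nat.even_or_odd n with he | ho
    · obtain ⟨c, hc⟩ := id he
      rw [hnt, if_pos he, hε, if_pos he]; omega
    · rw [hnt, if_neg (Nat.not_even_iff_odd.mpr ho), hε,
        if_neg (Nat.not_even_iff_odd.mpr ho)]; omega
  have hqpos : 0 < q :=
    Nat.div_pos (Nat.le_of_dvd hntpos hδa_dvd) (by positivity)
  have hεpos : 0 < ε := by
    rcases Nat.even_or_odd n with he | ho
    · rw [hε, if_pos he]; omega
    · rw [hε, if_neg (Nat.not_even_iff_odd.mpr ho)]; omega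
  have hna : n / a = ε * δ * q := by
    have h : n = a * (ε * δ * q) := by rw [hn_eq, hnt_eq]; ring
    rw [h, Nat.mul_div_cancel_left _ hapos]
  have hcop : IsCoprime (q : ℤ) s := ⟨r, -((δ' : ℕ) : ℤ), by linarith [hrs]⟩
  have homega : (1 : ℤ) - ω = -(2 * s * (δ' : ℤ)) := by rw [hω, ← hrs]; ring
  have hδcast : (a : ℤ) * (δ' : ℤ) = (δ : ℤ) := by exact_mod_cast congrArg (Nat.cast (R := ℤ)) hδeq
  have key : ∀ j : ℕ, (a ∣ j ∧ ((n / a : ℕ) : ℤ) ∣ ((j : ℤ) - ω * (j : ℤ))) ↔ a * q ∣ j := by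
    intro j
    constructor
    · rintro ⟨⟨k, hk⟩, hdvd⟩
      have hj : (j : ℤ) = (a : ℤ) * k := by exact_mod_cast congrArg (Nat.cast (R := ℤ)) hk
      have h1 : ((j : ℤ) - ω * (j : ℤ)) = -((δ : ℤ) * (2 * s * k)) := by
        have h0 : (j : ℤ) - ω * j = (1 - ω) * j := by ring
        rw [h0, homega, hj, ← hδcast]; ring
      rw [hna, h1, dvd_neg] at hdvd
      have h2 : ((δ : ℤ) * ((ε : ℤ) * q)) ∣ (δ : ℤ) * (2 * s * k) := by
        have hcast2 : ((ε * δ * q : ℕ) : ℤ) = (δ : ℤ) * ((ε : ℤ) * q) := by push_cast; ring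
        rwa [hcast2] at hdvd
      have h3 : ((ε : ℤ) * q) ∣ 2 * s * k :=
        (mul_dvd_mul_iff_left (by exact_mod_cast hδpos.ne' : (δ : ℤ) ≠ 0)).mp h2
      have h4 : (q : ℤ) ∣ s * k := by
        rcases Nat.even_or_odd n with he | ho
        · have hε2 : ε = 2 := by rw [hε, if_pos he]
          rw [hε2] at h3
          have h3' : (2 : ℤ) * (q : ℤ) ∣ 2 * (s * k) := by
            have e1 : ((2:ℕ) : ℤ) * q = (2:ℤ) * q := by push_cast; ring
            have e2 : 2 * s * k = 2 * (s * k) := by ring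
            rwa [e1, e2] at h3
          exact (mul_dvd_mul_iff_left (by norm_num : (2:ℤ) ≠ 0)).mp h3'
        · have hε1 : ε = 1 := by rw [hε, if_neg (Nat.not_even_iff_odd.mpr ho)]
          rw [hε1] at h3
          have h3' : (q : ℤ) ∣ 2 * (s * k) := by
            have e1 : ((1:ℕ) : ℤ) * q = (q:ℤ) := by push_cast; ring
            have e2 : 2 * s * k = 2 * (s * k) := by ring
            rwa [e1, e2] at h3
          have hqodd : Odd q := by
            have hqnt : q ∣ nt := Dvd.intro_left _ hnt_eq.symm
            have hntn : nt = n := by rw [hnt, if_neg (Nat.not_even_iff_odd.mpr ho)]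
            exact ho.of_dvd_nat (hntn ▸ hqnt)
          have hcop2 : IsCoprime (q : ℤ) 2 := by
            rcases hqodd with ⟨t, ht⟩
            exact ⟨1, -(t : ℤ), by push_cast [ht]; ring⟩
          exact hcop2.dvd_of_dvd_mul_left h3'
      have h5 : (q : ℤ) ∣ k := hcop.dvd_of_dvd_mul_left h4
      have h6 : q ∣ k := by exact_mod_cast h5
      exact hk ▸ mul_dvd_mul_left a h6
    · rintro ⟨t, ht⟩
      refine ⟨⟨q * t, by rw [ht]; ring⟩, ?_⟩
      rw [hna]
      have hj : (j : ℤ) = (a : ℤ) * q * t := by exact_mod_cast congrArg (Nat.cast (R := ℤ)) ht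
      have h1 : ((j : ℤ) - ω * (j : ℤ)) = -((δ : ℤ) * (q:ℤ) * (2 * s * t)) := by
        have h0 : (j : ℤ) - ω * j = (1 - ω) * j := by ring
        rw [h0, homega, hj, ← hδcast]; ring
      rw [h1, dvd_neg]
      rcases Nat.even_or_odd n with he | ho
      · have hε2 : ε = 2 := by rw [hε, if_pos he]
        exact ⟨s * t, by push_cast [hε2]; ring⟩
      · have hε1 : ε = 1 := by rw [hε, if_neg (Nat.not_even_iff_odd.mpr ho)]
        exact ⟨2 * s * t, by push_cast [hε1]; ring⟩
  -- rewrite the diagonal entries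
  have hcond : ∀ j : ZMod n, Z j j = if a * q ∣ j.val then 1 else 0 := by
    intro j
    rw [hZ]
    have hiff : (a ∣ j.val ∧ a ∣ j.val ∧
        ((n / a : ℕ) : ℤ) ∣ ((j.val : ℤ) - ω * (j.val : ℤ))) ↔ a * q ∣ j.val := by
      rw [← key j.val]
      constructor
      · rintro ⟨h1, _, h3⟩; exact ⟨h1, h3⟩
      · rintro ⟨h1, h3⟩; exact ⟨h1, h1, h3⟩
    rw [if_congr hiff rfl rfl]
  -- counting
  have hsum : ∑ j : ZMod n, Z j j = ∑ i ∈ Finset.range n, (if a * q ∣ i then 1 else 0) := by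
    obtain ⟨m, hm⟩ : ∃ m, n = m + 1 := ⟨n - 1, by omega⟩
    subst hm
    rw [Finset.sum_congr rfl (fun j _ => hcond j)]
    exact Fin.sum_univ_eq_sum_range (fun i => if a * q ∣ i then 1 else 0) (m + 1)
  rw [hsum, ← Finset.card_filter]
  have himg : (Finset.range n).filter (fun i => a * q ∣ i)
      = (Finset.range (ε * δ)).image (fun t => (a * q) * t) := by
    ext x
    simp only [Finset.mem_filter, Finset.mem_range, Finset.mem_image]
    have hnd : n = (a * q) * (ε * δ) := by rw [hn_eq, hnt_eq]; ring
    constructor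
    · rintro ⟨hx, ⟨t, rfl⟩⟩
      refine ⟨t, ?_, rfl⟩
      rw [hnd] at hx
      exact lt_of_mul_lt_mul_left hx (Nat.zero_le _)
    · rintro ⟨t, htlt, rfl⟩
      refine ⟨?_, ⟨t, rfl⟩⟩
      rw [hnd]
      exact (Nat.mul_lt_mul_left (by positivity)).mpr htlt
  rw [himg, Finset.card_image_of_injective _ (mul_right_injective₀ (by positivity)),
    Finset.card_range]
end

section
/- Let S be the 4×4 complex matrix S = (1/2)·[[1,1,1,1],[1,1,−1,−1],[1,−1,1,−1],[1,−1,−1,1]] and let T be the 4×4 diagonal matrix T = e^{iπ/3}·diag(1,−1,−1,−1) (the Kac–Peterson matrices of SO(8) at level 1). Then a 4×4 matrix Z with non-negative integer entries satisfies Z_{0,0} = 1, ZS = SZ and ZT = TZ if and only if there is a permutation π of {0,1,2,3} with π(0) = 0 such that Z_{λ,μ} = δ_{μ,π(λ)}. In particular there are exactly six such matrices Z, corresponding to the six permutations of the three indices 1, 2, 3. -/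
open scoped Real

/-- For the Kac–Peterson matrices `S`, `T` of `SO(8)` level 1, a matrix
`Z` with non-negative integer entries satisfies `Z 0 0 = 1`, `ZS = SZ`, `ZT = TZ` iff it
is the permutation matrix of a permutation of `{0,1,2,3}` fixing `0`; in particular
there are exactly six such matrices. -/
theorem so8_level1_modular_invariants
    (S T : Matrix (Fin 4) (Fin 4) ℂ)
    (hS : S = (1 / 2 : ℂ) • !![1, 1, 1, 1; 1, 1, -1, -1; 1, -1, 1, -1; 1, -1, -1, 1])
    (hT : T = Complex.exp ((π : ℂ) * Complex.I / 3) • Matrix.diagonal ![1, -1, -1, -1]) :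
    (∀ Z : Matrix (Fin 4) (Fin 4) ℕ,
      (Z 0 0 = 1 ∧
        Z.map (fun k : ℕ => (k : ℂ)) * S = S * Z.map (fun k : ℕ => (k : ℂ)) ∧
        Z.map (fun k : ℕ => (k : ℂ)) * T = T * Z.map (fun k : ℕ => (k : ℂ))) ↔
      ∃ p : Equiv.Perm (Fin 4), p 0 = 0 ∧
        ∀ lam mu : Fin 4, Z lam mu = if mu = p lam then 1 else 0) ∧
    {Z : Matrix (Fin 4) (Fin 4) ℕ | Z 0 0 = 1 ∧
        Z.map (fun k : ℕ => (k : ℂ)) * S = S * Z.map (fun k : ℕ => (k : ℂ)) ∧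
        Z.map (fun k : ℕ => (k : ℂ)) * T = T * Z.map (fun k : ℕ => (k : ℂ))}.ncard = 6 := by
  set c : ℂ := Complex.exp ((π : ℂ) * Complex.I / 3) with hc
  have hcne : c ≠ 0 := Complex.exp_ne_zero _
  have hSe : ∀ i j : Fin 4, S i j = if i = 0 ∨ j = 0 ∨ i = j then (1/2 : ℂ) else (-(1/2) : ℂ) := by
    intro i j; fin_cases i <;> fin_cases j <;> simp [hS, Matrix.vecHead, Matrix.vecTail]
  have hTe : ∀ i j : Fin 4, T i j = if i = j then (c * (if i = 0 then 1 else -1)) else 0 := by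
    intro i j; fin_cases i <;> fin_cases j <;> simp [hT, Matrix.diagonal]
  have key : ∀ Z : Matrix (Fin 4) (Fin 4) ℕ,
      (Z 0 0 = 1 ∧
        Z.map (fun k : ℕ => (k : ℂ)) * S = S * Z.map (fun k : ℕ => (k : ℂ)) ∧
        Z.map (fun k : ℕ => (k : ℂ)) * T = T * Z.map (fun k : ℕ => (k : ℂ))) ↔
      ∃ p : Equiv.Perm (Fin 4), p 0 = 0 ∧
        ∀ lam mu : Fin 4, Z lam mu = if mu = p lam then 1 else 0 := by
    intro Z
    constructor
    · rintro ⟨h00, hZS, hZT⟩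
      -- border zeros from the T equation
      have hb : ∀ i j : Fin 4, ((i = 0) ↔ (j = 0)) = False → Z i j = 0 := by
        intro i j hne
        have h := Matrix.ext_iff.mpr hZT i j
        simp only [Matrix.mul_apply, Matrix.map_apply, hTe, mul_ite, mul_zero, ite_mul, zero_mul,
          Finset.sum_ite_eq, Finset.sum_ite_eq', Finset.mem_univ, if_true] at h
        by_cases hi : i = 0 <;> by_cases hj : j = 0 <;> simp [hi, hj] at hne h ⊢
        · have h2 : c * ((Z 0 j : ℂ) * 2) = 0 := by linear_combination -h
          rcases mul_eq_zero.mp h2 with h3 | h3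
          · exact absurd h3 hcne
          · rcases mul_eq_zero.mp h3 with h4 | h4
            · exact_mod_cast h4
            · norm_num at h4
        · have h2 : c * ((Z i 0 : ℂ) * 2) = 0 := by linear_combination h
          rcases mul_eq_zero.mp h2 with h3 | h3
          · exact absurd h3 hcne
          · rcases mul_eq_zero.mp h3 with h4 | h4
            · exact_mod_cast h4
            · norm_num at h4
      have hb10 : Z 1 0 = 0 := hb 1 0 (by simp)
      have hb20 : Z 2 0 = 0 := hb 2 0 (by simp)
      have hb30 : Z 3 0 = 0 := hb 3 0 (by simp)
      have hb01 : Z 0 1 = 0 := hb 0 1 (by simp)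
      have hb02 : Z 0 2 = 0 := hb 0 2 (by simp)
      have hb03 : Z 0 3 = 0 := hb 0 3 (by simp)
      -- row and column sums from the S equation
      have hrow : ∀ i : Fin 4, Z i 0 + Z i 1 + Z i 2 + Z i 3 = 1 := by
        intro i
        have h := Matrix.ext_iff.mpr hZS i 0
        simp only [Matrix.mul_apply, Matrix.map_apply, hSe, Fin.sum_univ_four,
          hb10, hb20, hb30, h00] at h
        norm_num at h
        apply @Nat.cast_injective ℂ _ _
        push_cast
        linear_combination 2*h
      have hcol : ∀ j : Fin 4, Z 0 j + Z 1 j + Z 2 j + Z 3 j = 1 := by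
        intro j
        have h := Matrix.ext_iff.mpr hZS 0 j
        simp only [Matrix.mul_apply, Matrix.map_apply, hSe, Fin.sum_univ_four,
          hb01, hb02, hb03, h00] at h
        norm_num at h
        apply @Nat.cast_injective ℂ _ _
        push_cast
        linear_combination -2*h
      -- build the permutation
      have hex : ∀ i : Fin 4, ∃ j, Z i j = 1 ∧ ∀ j', j' ≠ j → Z i j' = 0 := by
        intro i
        have h := hrow i
        have : (Z i 0 = 1 ∧ Z i 1 = 0 ∧ Z i 2 = 0 ∧ Z i 3 = 0) ∨
               (Z i 1 = 1 ∧ Z i 0 = 0 ∧ Z i 2 = 0 ∧ Z i 3 = 0) ∨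
               (Z i 2 = 1 ∧ Z i 0 = 0 ∧ Z i 1 = 0 ∧ Z i 3 = 0) ∨
               (Z i 3 = 1 ∧ Z i 0 = 0 ∧ Z i 1 = 0 ∧ Z i 2 = 0) := by omega
        rcases this with ⟨h1, h2⟩ | ⟨h1, h2⟩ | ⟨h1, h2⟩ | ⟨h1, h2⟩
        · refine ⟨0, h1, ?_⟩
          intro j' hj'; fin_cases j'
          · exact absurd (by decide) hj'
          · exact h2.1
          · exact h2.2.1
          · exact h2.2.2
        · refine ⟨1, h1, ?_⟩
          intro j' hj'; fin_cases j'
          · exact h2.1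
          · exact absurd (by decide) hj'
          · exact h2.2.1
          · exact h2.2.2
        · refine ⟨2, h1, ?_⟩
          intro j' hj'; fin_cases j'
          · exact h2.1
          · exact h2.2.1
          · exact absurd (by decide) hj'
          · exact h2.2.2
        · refine ⟨3, h1, ?_⟩
          intro j' hj'; fin_cases j'
          · exact h2.1
          · exact h2.2.1
          · exact h2.2.2
          · exact absurd (by decide) hj'
      choose f hf1 hf2 using hex
      have hcol' : ∀ j : Fin 4, ∑ i, Z i j = 1 := by
        intro j; rw [Fin.sum_univ_four]; exact hcol j
      have hinj : Function.Injective f := by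
        intro a b hab
        by_contra hne
        have ha := hf1 a
        rw [hab] at ha
        have h2 : (2:ℕ) ≤ ∑ i, Z i (f b) := by
          calc (2:ℕ) = Z a (f b) + Z b (f b) := by rw [ha, hf1 b]
          _ = ∑ i ∈ ({a, b} : Finset (Fin 4)), Z i (f b) := (Finset.sum_pair (f := fun i => Z i (f b)) hne).symm
          _ ≤ ∑ i, Z i (f b) := Finset.sum_le_sum_of_subset (Finset.subset_univ _)
        rw [hcol'] at h2
        omega
      have hbij := Finite.injective_iff_bijective.mp hinj
      refine ⟨Equiv.ofBijective f hbij, ?_, ?_⟩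
      · show f 0 = 0
        by_contra hne
        have := hf2 0 0 (fun h => hne h.symm)
        omega
      · intro lam mu
        show Z lam mu = if mu = f lam then 1 else 0
        by_cases hm : mu = f lam
        · rw [hm, if_pos rfl]; exact hf1 lam
        · rw [if_neg hm]; exact hf2 lam mu hm
    · rintro ⟨p, hp0, hZ⟩
      have hp0' : ∀ i : Fin 4, p i = 0 ↔ i = 0 := by
        intro i
        constructor
        · intro h; exact p.injective (h.trans hp0.symm)
        · rintro rfl; exact hp0
      have hmap : ∀ i j : Fin 4, Z.map (fun k : ℕ => (k : ℂ)) i j = if j = p i then 1 else 0 := by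
        intro i j; simp [Matrix.map_apply, hZ i j, apply_ite (fun k : ℕ => (k : ℂ))]
      have hL : ∀ (M : Matrix (Fin 4) (Fin 4) ℂ) (i j : Fin 4),
          (Z.map (fun k : ℕ => (k : ℂ)) * M) i j = M (p i) j := by
        intro M i j
        rw [Matrix.mul_apply, Fintype.sum_eq_single (p i)
          (fun b hb => by rw [hmap, if_neg hb, zero_mul]),
          hmap, if_pos rfl, one_mul]
      have hR : ∀ (M : Matrix (Fin 4) (Fin 4) ℂ) (i j : Fin 4),
          (M * Z.map (fun k : ℕ => (k : ℂ))) i j = M i (p.symm j) := by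
        intro M i j
        rw [Matrix.mul_apply, Fintype.sum_eq_single (p.symm j)
          (fun b hb => by
            rw [hmap, if_neg (fun h => hb (by rw [Equiv.eq_symm_apply, ← h])), mul_zero]),
          hmap, if_pos (p.apply_symm_apply j).symm, mul_one]
      refine ⟨by rw [hZ 0 0, if_pos hp0.symm], ?_, ?_⟩
      · ext i j
        obtain ⟨m, rfl⟩ : ∃ m, j = p m := ⟨p.symm j, (p.apply_symm_apply j).symm⟩
        rw [hL, hR, p.symm_apply_apply, hSe, hSe]
        refine if_congr ?_ rfl rfl
        rw [hp0' i, hp0' m, p.injective.eq_iff]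
      · ext i j
        obtain ⟨m, rfl⟩ : ∃ m, j = p m := ⟨p.symm j, (p.apply_symm_apply j).symm⟩
        rw [hL, hR, p.symm_apply_apply, hTe, hTe]
        exact if_congr p.injective.eq_iff (by simp only [hp0' i]) rfl
  refine ⟨key, ?_⟩
  have hset : {Z : Matrix (Fin 4) (Fin 4) ℕ | Z 0 0 = 1 ∧
        Z.map (fun k : ℕ => (k : ℂ)) * S = S * Z.map (fun k : ℕ => (k : ℂ)) ∧
        Z.map (fun k : ℕ => (k : ℂ)) * T = T * Z.map (fun k : ℕ => (k : ℂ))} =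
      (fun p : Equiv.Perm (Fin 4) =>
        (Matrix.of fun lam mu : Fin 4 => if mu = p lam then 1 else 0 : Matrix (Fin 4) (Fin 4) ℕ)) ''
      {p : Equiv.Perm (Fin 4) | p 0 = 0} := by
    ext Z
    simp only [Set.mem_setOf_eq, Set.mem_image, key Z]
    constructor
    · rintro ⟨p, hp0, hZ⟩
      exact ⟨p, hp0, by ext lam mu; exact (hZ lam mu).symm⟩
    · rintro ⟨p, hp0, rfl⟩
      exact ⟨p, hp0, fun lam mu => rfl⟩
  rw [hset, Set.ncard_image_of_injective _ ?inj]
  · rw [Set.ncard_eq_toFinset_card']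
    decide
  case inj =>
    intro p q hpq
    apply Equiv.ext
    intro i
    by_contra hne
    have := congrFun (congrFun hpq i) (p i)
    simp [hne] at this
end

section
/- Let I be a finite index set with a distinguished element 0, and let S be a unitary, symmetric complex matrix indexed by I whose 0-column entries S_{λ,0} are real and strictly positive. Assume that all Verlinde numbers N_{λ,μ}^ν := Σ_{ρ∈I} S_{λ,ρ} S_{μ,ρ} conj(S_{ν,ρ}) / S_{0,ρ} are non-negative real numbers. Then for all λ, μ ∈ I one has |S_{λ,μ}| ≤ S_{λ,0}·S_{μ,0}/S_{0,0}; equivalently, |S_{λ,μ}/S_{0,μ}| ≤ d_λ where d_λ = S_{λ,0}/S_{0,0}. -/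
/-!
Fix `λ` and let `N_λ = S · diag(S_{λρ} / S_{0ρ}) · Sᴴ`, whose `(m, n)` entry is the Verlinde number
`N_{λ m}^n`. By unitarity the `μ`-th column of `S` is an eigenvector of `N_λ` with eigenvalue
`S_{λμ} / S_{0μ}`, and the positive vector `(S_{m0})_m` is a left eigenvector with eigenvalue `d_λ`.
As `N_λ` has non-negative entries, summing the triangle inequality for the `μ`-th column against
this positive left eigenvector gives `|S_{λμ} / S_{0μ}| ≤ d_λ`; finally `S_{0μ} = S_{μ0}` by symmetry.
-/

open Finset Matrix
open scoped ComplexConjugate ComplexOrder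

theorem norm_le_of_mulVec_eq_smul_of_weighted_colSum_le {𝕜 n : Type*} [NormedField 𝕜]
    [Fintype n] {A : Matrix n n 𝕜} {w : n → ℝ} (hw : ∀ i, 0 < w i) {r : ℝ}
    (hA : ∀ j, ∑ i, w i * ‖A i j‖ ≤ r * w j) {x : n → 𝕜} (hx : x ≠ 0) {c : 𝕜}
    (hAx : A *ᵥ x = c • x) : ‖c‖ ≤ r := by
  set T := ∑ i, w i * ‖x i‖
  have hT : 0 < T := by
    obtain ⟨j, hj⟩ := Function.ne_iff.mp hx
    exact sum_pos' (fun i _ => mul_nonneg (hw i).le (norm_nonneg _))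
      ⟨j, mem_univ _, mul_pos (hw j) (norm_pos_iff.mpr hj)⟩
  refine le_of_mul_le_mul_right ?_ hT
  calc ‖c‖ * T = ∑ i, w i * ‖(A *ᵥ x) i‖ := by
        simp only [T, hAx, Pi.smul_apply, smul_eq_mul, norm_mul, mul_sum]
        exact sum_congr rfl fun i _ => by ring
    _ ≤ ∑ i, w i * ∑ j, ‖A i j‖ * ‖x j‖ := by
        gcongr with i _
        · exact (hw i).le
        · simpa only [mulVec, dotProduct, norm_mul] using norm_sum_le univ fun j => A i j * x j
    _ = ∑ j, (∑ i, w i * ‖A i j‖) * ‖x j‖ := by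
        simp only [mul_sum, sum_mul, mul_assoc]
        exact sum_comm
    _ ≤ ∑ j, r * w j * ‖x j‖ := by gcongr with j; exact hA j
    _ = r * T := by simp only [T, mul_sum, mul_assoc]

section Verlinde

variable {I : Type*} [Fintype I] [DecidableEq I] (S : Matrix I I ℂ) (i0 lam : I)

noncomputable def verlindeMatrix : Matrix I I ℂ :=
  S * diagonal (fun ρ => S lam ρ / S i0 ρ) * Sᴴ

theorem verlindeMatrix_apply (m n : I) :
    verlindeMatrix S i0 lam m n = ∑ ρ, S lam ρ * S m ρ * conj (S n ρ) / S i0 ρ := by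
  rw [verlindeMatrix, mul_apply]
  simp only [mul_diagonal, conjTranspose_apply, RCLike.star_def]
  exact sum_congr rfl fun ρ _ => by ring

variable {S}

theorem verlindeMatrix_mul_self (hS : star S * S = 1) :
    verlindeMatrix S i0 lam * S = S * diagonal (fun ρ => S lam ρ / S i0 ρ) := by
  rw [verlindeMatrix, Matrix.mul_assoc, ← star_eq_conjTranspose, hS, Matrix.mul_one]

theorem conjTranspose_mul_verlindeMatrix (hS : star S * S = 1) :
    Sᴴ * verlindeMatrix S i0 lam = diagonal (fun ρ => S lam ρ / S i0 ρ) * Sᴴ := by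
  rw [verlindeMatrix, ← Matrix.mul_assoc, ← Matrix.mul_assoc, ← star_eq_conjTranspose, hS,
    Matrix.one_mul]

theorem verlindeMatrix_mulVec_col (hS : star S * S = 1) (mu : I) :
    verlindeMatrix S i0 lam *ᵥ (fun m => S m mu) = (S lam mu / S i0 mu) • fun m => S m mu := by
  ext m
  have h := congrFun (congrFun (verlindeMatrix_mul_self i0 lam hS) m) mu
  rw [mul_apply, mul_diagonal] at h
  simp only [mulVec, dotProduct, Pi.smul_apply, smul_eq_mul, h]
  ring

theorem sum_conj_mul_verlindeMatrix (hS : star S * S = 1) (n : I) :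
    ∑ m, conj (S m i0) * verlindeMatrix S i0 lam m n = S lam i0 / S i0 i0 * conj (S n i0) := by
  have h := congrFun (congrFun (conjTranspose_mul_verlindeMatrix i0 lam hS) i0) n
  rw [mul_apply, diagonal_mul] at h
  simpa only [conjTranspose_apply, RCLike.star_def] using h

theorem sum_re_mul_verlindeMatrix_re (hS : star S * S = 1) (hreal : ∀ m, (S m i0).im = 0)
    (hNreal : ∀ m n, (verlindeMatrix S i0 lam m n).im = 0) (n : I) :
    ∑ m, (S m i0).re * (verlindeMatrix S i0 lam m n).re
      = (S lam i0).re / (S i0 i0).re * (S n i0).re := by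
  have hcast m : ((S m i0).re : ℂ) = S m i0 :=
    Complex.conj_eq_iff_re.mp (Complex.conj_eq_iff_im.mpr (hreal m))
  have h := congrArg Complex.re (sum_conj_mul_verlindeMatrix i0 lam hS n)
  rw [← hcast lam, ← hcast i0, ← hcast n, ← Complex.ofReal_div, Complex.conj_ofReal,
    ← Complex.ofReal_mul, Complex.ofReal_re, Complex.re_sum] at h
  simpa [Complex.mul_re, hreal, hNreal] using h

end Verlinde

/-- If `S` is unitary and symmetric with real strictly positive
`i0`-column, and all Verlinde numbers `N λ μ ν = Σ_ρ S λ ρ * S μ ρ * conj (S ν ρ) / S i0 ρ`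
are non-negative reals, then `|S λ μ| ≤ S λ i0 · S μ i0 / S i0 i0`. -/
theorem S_matrix_entry_bound
    {I : Type*} [Fintype I] [DecidableEq I] (i0 : I)
    (S : Matrix I I ℂ) (hS : S ∈ Matrix.unitaryGroup I ℂ)
    (hsymm : S.transpose = S)
    (hreal : ∀ lam : I, (S lam i0).im = 0)
    (hpos : ∀ lam : I, 0 < (S lam i0).re)
    (hNnn : ∀ lam mu nu : I,
      ((∑ rho : I, S lam rho * S mu rho * conj (S nu rho) / S i0 rho).im = 0 ∧
        0 ≤ (∑ rho : I, S lam rho * S mu rho * conj (S nu rho) / S i0 rho).re)) :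
    ∀ lam mu : I, ‖S lam mu‖ ≤ (S lam i0).re * (S mu i0).re / (S i0 i0).re := by
  intro lam mu
  have hU : star S * S = 1 := mem_unitaryGroup_iff'.mp hS
  have hNreal m n : (verlindeMatrix S i0 lam m n).im = 0 := by
    rw [verlindeMatrix_apply]; exact (hNnn lam m n).1
  have hNnorm m n : ‖verlindeMatrix S i0 lam m n‖ = (verlindeMatrix S i0 lam m n).re := by
    refine (Complex.re_eq_norm.mpr (Complex.nonneg_iff.mpr ⟨?_, (hNreal m n).symm⟩)).symm
    rw [verlindeMatrix_apply]; exact (hNnn lam m n).2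
  have hsym_i0 : S i0 mu = S mu i0 := congrFun (congrFun hsymm mu) i0
  have hnorm_i0 : ‖S i0 mu‖ = (S mu i0).re := by
    rw [hsym_i0]
    exact (Complex.re_eq_norm.mpr (Complex.nonneg_iff.mpr ⟨(hpos mu).le, (hreal mu).symm⟩)).symm
  have hne : S i0 mu ≠ 0 := norm_ne_zero_iff.mp (hnorm_i0 ▸ (hpos mu).ne')
  have heig : ‖S lam mu / S i0 mu‖ ≤ (S lam i0).re / (S i0 i0).re :=
    norm_le_of_mulVec_eq_smul_of_weighted_colSum_le hpos
      (fun n => by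
        simp_rw [hNnorm]; exact (sum_re_mul_verlindeMatrix_re i0 lam hU hreal hNreal n).le)
      (fun h => hne (congrFun h i0)) (verlindeMatrix_mulVec_col i0 lam hU mu)
  calc ‖S lam mu‖ = ‖S lam mu / S i0 mu‖ * ‖S i0 mu‖ := by
        rw [norm_div, div_mul_cancel₀ _ (norm_ne_zero_iff.mpr hne)]
    _ ≤ (S lam i0).re / (S i0 i0).re * (S mu i0).re := by
        rw [hnorm_i0]; exact mul_le_mul_of_nonneg_right heig (hpos mu).le
    _ = (S lam i0).re * (S mu i0).re / (S i0 i0).re := div_mul_eq_mul_div _ _ _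
end
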